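/- arXiv:2402.04947 — 8 statements merged into one kernel-verified Lean document; each statement's English description precedes it below -/
import Mathlib

section
/- Let (Q,Z) be a locally gentle pair and v a relational vertex of Q. Then the levee (Q^v, Z^v) of (Q,Z) at v is again a locally gentle pair. -/
attribute [local instance] Classical.propDecidable

/-- A quiver: vertices, arrows, head and tail maps. -/
structure Quiv where
  V : Type
  A : Type
  h : A → V
  t : A → V

/-- A (possibly empty) list of arrows is a path when consecutive arrows compose:
`t aᵢ = h aᵢ₊₁` (paths are written right-to-left as in the paper). -/
def Quiv.IsPath (Q : Quiv) (p : List Q.A) : Prop :=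
  p.Chain' (fun x y => Q.t x = Q.h y)

/-- A locally gentle pair `(Q,Z)`: `Z` is a set of length-2 paths (pairs `(b,a)` with
`t b = h a`), every vertex is head (resp. tail) of at most two arrows, and each arrow
extends in at most one way inside `Z` and at most one way outside `Z` on each side. -/
structure LocallyGentle (Q : Quiv) (Z : Set (Q.A × Q.A)) : Prop where
  comp : ∀ p ∈ Z, Q.t p.1 = Q.h p.2
  head_two : ∀ (v : Q.V) (a b c : Q.A),
    Q.h a = v → Q.h b = v → Q.h c = v → a = b ∨ a = c ∨ b = c
  tail_two : ∀ (v : Q.V) (a b c : Q.A),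
    Q.t a = v → Q.t b = v → Q.t c = v → a = b ∨ a = c ∨ b = c
  rel_right : ∀ b a a' : Q.A, (b, a) ∈ Z → (b, a') ∈ Z → a = a'
  adm_right : ∀ b a a' : Q.A, Q.t b = Q.h a → Q.t b = Q.h a' →
    (b, a) ∉ Z → (b, a') ∉ Z → a = a'
  rel_left : ∀ b c c' : Q.A, (c, b) ∈ Z → (c', b) ∈ Z → c = c'
  adm_left : ∀ b c c' : Q.A, Q.t c = Q.h b → Q.t c' = Q.h b →
    (c, b) ∉ Z → (c', b) ∉ Z → c = c'

/-- A vertex is relational if some relation `ba ∈ Z` passes through it,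
i.e. `t b = v = h a`. -/
def Relational (Q : Quiv) (Z : Set (Q.A × Q.A)) (v : Q.V) : Prop :=
  ∃ b a : Q.A, (b, a) ∈ Z ∧ Q.t b = v ∧ Q.h a = v

/-- The levee of `(Q,Z)` at a relational vertex `v`, relative to a chosen relation
`(b,a) ∈ Z` through `v`.  The vertex `v` is replaced by two new vertices
`v(♯) = Sum.inr true` and `v(♭) = Sum.inr false`; arrows are unchanged; an arrow `x`
with tail `v` gets new tail `v(♯)` iff `(x,a) ∈ Z`, and an arrow `y` with head `v`
gets new head `v(♭)` iff `(b,y) ∈ Z`. -/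
noncomputable def levee (Q : Quiv) (Z : Set (Q.A × Q.A)) (v : Q.V) (b a : Q.A) : Quiv where
  V := {u : Q.V // u ≠ v} ⊕ Bool
  A := Q.A
  h := fun x =>
    if hx : Q.h x = v then (if (b, x) ∈ Z then Sum.inr false else Sum.inr true)
    else Sum.inl ⟨Q.h x, hx⟩
  t := fun x =>
    if hx : Q.t x = v then (if (x, a) ∈ Z then Sum.inr true else Sum.inr false)
    else Sum.inl ⟨Q.t x, hx⟩

/-- The relation set of the levee: the relations of `Z` not passing through `v`. -/
def leveeZ (Q : Quiv) (Z : Set (Q.A × Q.A)) (v : Q.V) : Set (Q.A × Q.A) :=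
  {p | p ∈ Z ∧ Q.t p.1 ≠ v ∧ Q.h p.2 ≠ v}

/-!
The levee does not change the arrows, and sending `v(♯)` and `v(♭)` back to `v` recovers `Q`,
so the bounds on heads and tails and the uniqueness of relations are inherited from `(Q,Z)`, as
is the uniqueness of non-relations away from `v`. The arrows ending at `v(♭)` are the `y` with
`by ∈ Z`, so there is at most one of them; those ending at `v(♯)` end at `v` and differ from `a`,
which also ends at `v`, so there is at most one of them too. Dually at the tails.
-/

namespace Levee

variable {Q : Quiv} {Z : Set (Q.A × Q.A)} {v : Q.V} {b a : Q.A}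

def collapse (v : Q.V) : {u : Q.V // u ≠ v} ⊕ Bool → Q.V :=
  Sum.elim Subtype.val fun _ => v

@[simp]
lemma collapse_h (x : Q.A) : collapse v ((levee Q Z v b a).h x) = Q.h x := by
  simp only [levee]
  split_ifs <;> simp_all [collapse]

@[simp]
lemma collapse_t (x : Q.A) : collapse v ((levee Q Z v b a).t x) = Q.t x := by
  simp only [levee]
  split_ifs <;> simp_all [collapse]

lemma h_of_ne {x : Q.A} (hx : Q.h x ≠ v) :
    (levee Q Z v b a).h x = Sum.inl ⟨Q.h x, hx⟩ :=
  dif_neg hx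

lemma t_of_ne {x : Q.A} (hx : Q.t x ≠ v) :
    (levee Q Z v b a).t x = Sum.inl ⟨Q.t x, hx⟩ :=
  dif_neg hx

lemma h_eq_flat {x : Q.A} :
    (levee Q Z v b a).h x = Sum.inr false ↔ Q.h x = v ∧ (b, x) ∈ Z := by
  simp only [levee]
  split_ifs <;> simp_all

lemma h_eq_sharp {x : Q.A} :
    (levee Q Z v b a).h x = Sum.inr true ↔ Q.h x = v ∧ (b, x) ∉ Z := by
  simp only [levee]
  split_ifs <;> simp_all

lemma t_eq_sharp {x : Q.A} :
    (levee Q Z v b a).t x = Sum.inr true ↔ Q.t x = v ∧ (x, a) ∈ Z := by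
  simp only [levee]
  split_ifs <;> simp_all

lemma t_eq_flat {x : Q.A} :
    (levee Q Z v b a).t x = Sum.inr false ↔ Q.t x = v ∧ (x, a) ∉ Z := by
  simp only [levee]
  split_ifs <;> simp_all

lemma comp (lg : LocallyGentle Q Z) :
    ∀ p ∈ leveeZ Q Z v, (levee Q Z v b a).t p.1 = (levee Q Z v b a).h p.2 := by
  rintro ⟨m, n⟩ ⟨hZ, hm, hn⟩
  rw [t_of_ne hm, h_of_ne hn]
  exact congrArg Sum.inl (Subtype.ext (lg.comp _ hZ))

lemma head_two (lg : LocallyGentle Q Z) (w : (levee Q Z v b a).V) (x y z : Q.A)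
    (hx : (levee Q Z v b a).h x = w) (hy : (levee Q Z v b a).h y = w)
    (hz : (levee Q Z v b a).h z = w) : x = y ∨ x = z ∨ y = z :=
  lg.head_two (collapse v w) x y z (by simp [← hx]) (by simp [← hy]) (by simp [← hz])

lemma tail_two (lg : LocallyGentle Q Z) (w : (levee Q Z v b a).V) (x y z : Q.A)
    (hx : (levee Q Z v b a).t x = w) (hy : (levee Q Z v b a).t y = w)
    (hz : (levee Q Z v b a).t z = w) : x = y ∨ x = z ∨ y = z :=
  lg.tail_two (collapse v w) x y z (by simp [← hx]) (by simp [← hy]) (by simp [← hz])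

lemma adm_right (lg : LocallyGentle Q Z) (hba : (b, a) ∈ Z) (hha : Q.h a = v) (m n n' : Q.A)
    (hn : (levee Q Z v b a).t m = (levee Q Z v b a).h n)
    (hn' : (levee Q Z v b a).t m = (levee Q Z v b a).h n')
    (hmn : (m, n) ∉ leveeZ Q Z v) (hmn' : (m, n') ∉ leveeZ Q Z v) : n = n' := by
  rcases hm : (levee Q Z v b a).t m with u | _ | _
  · have hmv : Q.t m = u := by
      rw [← collapse_t (Z := Z) (b := b) (a := a) m, hm]; rfl
    have e : Q.t m = Q.h n := by simpa using congrArg (collapse v) hn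
    have e' : Q.t m = Q.h n' := by simpa using congrArg (collapse v) hn'
    exact lg.adm_right m n n' e e' (fun h => hmn ⟨h, hmv ▸ u.2, e ▸ hmv ▸ u.2⟩)
      (fun h => hmn' ⟨h, hmv ▸ u.2, e' ▸ hmv ▸ u.2⟩)
  · exact lg.rel_right b n n' (h_eq_flat.1 (hm ▸ hn).symm).2 (h_eq_flat.1 (hm ▸ hn').symm).2
  · obtain ⟨hnv, hbn⟩ := h_eq_sharp.1 (hm ▸ hn).symm
    obtain ⟨hn'v, hbn'⟩ := h_eq_sharp.1 (hm ▸ hn').symm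
    rcases lg.head_two v n n' a hnv hn'v hha with h | h | h
    · exact h
    · exact absurd (h ▸ hba) hbn
    · exact absurd (h ▸ hba) hbn'

lemma adm_left (lg : LocallyGentle Q Z) (hba : (b, a) ∈ Z) (htb : Q.t b = v) (m c c' : Q.A)
    (hc : (levee Q Z v b a).t c = (levee Q Z v b a).h m)
    (hc' : (levee Q Z v b a).t c' = (levee Q Z v b a).h m)
    (hcm : (c, m) ∉ leveeZ Q Z v) (hc'm : (c', m) ∉ leveeZ Q Z v) : c = c' := by
  rcases hm : (levee Q Z v b a).h m with u | _ | _
  · have hmv : Q.h m = u := by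
      rw [← collapse_h (Z := Z) (b := b) (a := a) m, hm]; rfl
    have e : Q.t c = Q.h m := by simpa using congrArg (collapse v) hc
    have e' : Q.t c' = Q.h m := by simpa using congrArg (collapse v) hc'
    exact lg.adm_left m c c' e e' (fun h => hcm ⟨h, e ▸ hmv ▸ u.2, hmv ▸ u.2⟩)
      (fun h => hc'm ⟨h, e' ▸ hmv ▸ u.2, hmv ▸ u.2⟩)
  · obtain ⟨hcv, hca⟩ := t_eq_flat.1 (hm ▸ hc)
    obtain ⟨hc'v, hc'a⟩ := t_eq_flat.1 (hm ▸ hc')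
    rcases lg.tail_two v c c' b hcv hc'v htb with h | h | h
    · exact h
    · exact absurd (h ▸ hba) hca
    · exact absurd (h ▸ hba) hc'a
  · exact lg.rel_left a c c' (t_eq_sharp.1 (hm ▸ hc)).2 (t_eq_sharp.1 (hm ▸ hc')).2

end Levee

/-- The levee of a locally gentle pair at a relational vertex is again locally gentle. -/
theorem stmt1 (Q : Quiv) (Z : Set (Q.A × Q.A)) (lg : LocallyGentle Q Z)
    (v : Q.V) (b a : Q.A) (hba : (b, a) ∈ Z) (htb : Q.t b = v) (hha : Q.h a = v) :
    LocallyGentle (levee Q Z v b a) (leveeZ Q Z v) := by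
  exact
    { comp := Levee.comp lg
      head_two := Levee.head_two lg
      tail_two := Levee.tail_two lg
      rel_right := fun m n n' hn hn' => lg.rel_right m n n' hn.1 hn'.1
      adm_right := Levee.adm_right lg hba hha
      rel_left := fun m c c' hc hc' => lg.rel_left m c c' hc.1 hc'.1
      adm_left := Levee.adm_left lg hba htb }
end

section
/- Let (Q,Z) be a locally gentle pair and let v, w be distinct relational vertices of Q. Let x denote the vertex of Q^w corresponding to v and y the vertex of Q^v corresponding to w. Then there is a quiver isomorphism from (Q^w)^x to (Q^v)^y taking the relation set (Z^w)^x onto (Z^v)^y. In other words, taking levees at two distinct relational vertices commutes up to isomorphism. -/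
attribute [local instance] Classical.propDecidable

/-- An isomorphism of quivers. -/
structure QuivIso (Q Q' : Quiv) where
  vEquiv : Q.V ≃ Q'.V
  aEquiv : Q.A ≃ Q'.A
  h_comm : ∀ x : Q.A, Q'.h (aEquiv x) = vEquiv (Q.h x)
  t_comm : ∀ x : Q.A, Q'.t (aEquiv x) = vEquiv (Q.t x)

/-! The two double levees have the same arrows, and each of `v`, `w` is split by its own
relation: since `v ≠ w`, the relation `(b₁, a₁)` through `v` avoids `w`, so it survives in `Z^w`
and splits `v` in `(Q^w)^x` exactly as it splits `v` in `Q^v`, and symmetrically for `w`. Hence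
the identity on arrows, together with the evident identification of the vertex sets, is an
isomorphism; and both relation sets consist of the relations of `Z` avoiding `v` and `w`. -/

/-- The vertex `u` of a quiver as a vertex of its levee at `v`; the bit `s` chooses between
`v(♯)` and `v(♭)` when `u = v` and is ignored otherwise. -/
noncomputable def leveeVertex {α : Type*} (v u : α) (s : Bool) : {u // u ≠ v} ⊕ Bool :=
  if h : u = v then .inr s else .inl ⟨u, h⟩

theorem leveeVertex_of_ne {α : Type*} {v u : α} (h : u ≠ v) (s : Bool) :
    leveeVertex v u s = .inl ⟨u, h⟩ :=
  dif_neg h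

@[simp]
theorem leveeVertex_self {α : Type*} (v : α) (s : Bool) :
    leveeVertex v v s = .inr s :=
  dif_pos rfl

theorem leveeVertex_eq_inl_iff {α : Type*} {v u : α} (s : Bool) (u' : {u // u ≠ v}) :
    leveeVertex v u s = .inl u' ↔ u = u' := by
  by_cases h : u = v
  · simp only [leveeVertex, h, dif_pos, reduceCtorEq, false_iff]
    exact fun h' => u'.2 h'.symm
  · simp only [leveeVertex_of_ne h, Sum.inl.injEq, Subtype.ext_iff]

def leveeSwapFun {α : Type*} {v w : α} (hvw : v ≠ w) :
    {u : {u : α // u ≠ w} ⊕ Bool // u ≠ .inl ⟨v, hvw⟩} ⊕ Bool →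
      {u : {u : α // u ≠ v} ⊕ Bool // u ≠ .inl ⟨w, hvw.symm⟩} ⊕ Bool
  | .inr c => .inl ⟨.inr c, Sum.inr_ne_inl⟩
  | .inl ⟨.inr c, _⟩ => .inr c
  | .inl ⟨.inl ⟨u, hu⟩, hl⟩ =>
      .inl ⟨.inl ⟨u, fun h => hl (congrArg Sum.inl (Subtype.ext h))⟩,
        fun h => hu (Subtype.ext_iff.mp (Sum.inl_injective h))⟩

/-- The vertex sets of the levees at `w` then `v`, and at `v` then `w`, agree: both consist of
the vertices other than `v, w` together with two copies each of `v` and `w`. -/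
def leveeSwap {α : Type*} {v w : α} (hvw : v ≠ w) :
    {u : {u : α // u ≠ w} ⊕ Bool // u ≠ .inl ⟨v, hvw⟩} ⊕ Bool ≃
      {u : {u : α // u ≠ v} ⊕ Bool // u ≠ .inl ⟨w, hvw.symm⟩} ⊕ Bool where
  toFun := leveeSwapFun hvw
  invFun := leveeSwapFun hvw.symm
  left_inv := by rintro (⟨(⟨u, hu⟩ | c), hl⟩ | c) <;> rfl
  right_inv := by rintro (⟨(⟨u, hu⟩ | c), hl⟩ | c) <;> rfl

theorem leveeSwap_leveeVertex {α : Type*} {v w : α} (hvw : v ≠ w) (u : α) (s t : Bool) :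
    leveeSwap hvw (leveeVertex (.inl ⟨v, hvw⟩) (leveeVertex w u t) s) =
      leveeVertex (.inl ⟨w, hvw.symm⟩) (leveeVertex v u s) t := by
  by_cases hv : u = v
  · subst hv
    simp only [ne_eq, hvw, not_false_eq_true, leveeVertex_of_ne, leveeVertex_self, reduceCtorEq]
    rfl
  by_cases hw : u = w
  · subst hw
    simp only [ne_eq, leveeVertex_self, reduceCtorEq, not_false_eq_true, leveeVertex_of_ne, hv]
    rfl
  · simp only [ne_eq, hw, not_false_eq_true, leveeVertex_of_ne, Sum.inl.injEq, Subtype.mk.injEq,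
      hv]
    rfl

section Levee

variable {Q : Quiv} {Z : Set (Q.A × Q.A)}

theorem levee_h (v : Q.V) (b a x : Q.A) :
    (levee Q Z v b a).h x = leveeVertex v (Q.h x) (decide ((b, x) ∉ Z)) := by
  simp only [levee, leveeVertex]
  split_ifs <;> simp_all

theorem levee_t (v : Q.V) (b a x : Q.A) :
    (levee Q Z v b a).t x = leveeVertex v (Q.t x) (decide ((x, a) ∈ Z)) := by
  simp only [levee, leveeVertex]
  split_ifs <;> simp_all

theorem mem_leveeZ_iff_of_ne {w : Q.V} {b a : Q.A} (hb : Q.t b ≠ w) (ha : Q.h a ≠ w) :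
    (b, a) ∈ leveeZ Q Z w ↔ (b, a) ∈ Z := by
  simp [leveeZ, hb, ha]

theorem mem_leveeZ_levee {v w : Q.V} (hvw : v ≠ w) (b a : Q.A) (p : Q.A × Q.A) :
    p ∈ leveeZ (levee Q Z w b a) (leveeZ Q Z w) (.inl ⟨v, hvw⟩) ↔
      p ∈ Z ∧ Q.t p.1 ≠ w ∧ Q.h p.2 ≠ w ∧ Q.t p.1 ≠ v ∧ Q.h p.2 ≠ v := by
  have ht : (levee Q Z w b a).t p.1 = .inl ⟨v, hvw⟩ ↔ Q.t p.1 = v := by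
    rw [levee_t]
    exact leveeVertex_eq_inl_iff _ _
  have hh : (levee Q Z w b a).h p.2 = .inl ⟨v, hvw⟩ ↔ Q.h p.2 = v := by
    rw [levee_h]
    exact leveeVertex_eq_inl_iff _ _
  change (p ∈ Z ∧ _ ∧ _) ∧ ¬_ ∧ ¬_ ↔ _
  rw [ht, hh]
  tauto

/-- Removing the relations through `w` does not affect how the relation `(b₁, a₁)` through
`v ≠ w` splits `v`. -/
theorem levee_levee_h {v w : Q.V} (hvw : v ≠ w) (b₂ a₂ b₁ a₁ : Q.A) (hb₁ : Q.t b₁ ≠ w)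
    (x : Q.A) :
    (levee (levee Q Z w b₂ a₂) (leveeZ Q Z w) (.inl ⟨v, hvw⟩) b₁ a₁).h x =
      leveeVertex (.inl ⟨v, hvw⟩) (leveeVertex w (Q.h x) (decide ((b₂, x) ∉ Z)))
        (decide ((b₁, x) ∉ Z)) := by
  refine (levee_h (Q := levee Q Z w b₂ a₂) (Z := leveeZ Q Z w) ..).trans ?_
  rw [levee_h]
  by_cases hx : Q.h x = v
  · congr 1
    exact decide_eq_decide.mpr (not_congr (mem_leveeZ_iff_of_ne hb₁ (by rwa [hx])))
  · have hne : leveeVertex w (Q.h x) (decide ((b₂, x) ∉ Z)) ≠ .inl ⟨v, hvw⟩ := by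
      rwa [Ne, leveeVertex_eq_inl_iff]
    exact (leveeVertex_of_ne hne _).trans (leveeVertex_of_ne hne _).symm

theorem levee_levee_t {v w : Q.V} (hvw : v ≠ w) (b₂ a₂ b₁ a₁ : Q.A) (ha₁ : Q.h a₁ ≠ w)
    (x : Q.A) :
    (levee (levee Q Z w b₂ a₂) (leveeZ Q Z w) (.inl ⟨v, hvw⟩) b₁ a₁).t x =
      leveeVertex (.inl ⟨v, hvw⟩) (leveeVertex w (Q.t x) (decide ((x, a₂) ∈ Z)))
        (decide ((x, a₁) ∈ Z)) := by
  refine (levee_t (Q := levee Q Z w b₂ a₂) (Z := leveeZ Q Z w) ..).trans ?_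
  rw [levee_t]
  by_cases hx : Q.t x = v
  · congr 1
    exact decide_eq_decide.mpr (mem_leveeZ_iff_of_ne (by rwa [hx]) ha₁)
  · have hne : leveeVertex w (Q.t x) (decide ((x, a₂) ∈ Z)) ≠ .inl ⟨v, hvw⟩ := by
      rwa [Ne, leveeVertex_eq_inl_iff]
    exact (leveeVertex_of_ne hne _).trans (leveeVertex_of_ne hne _).symm

theorem leveeSwap_levee_levee_h {v w : Q.V} (hvw : v ≠ w) (b₁ a₁ b₂ a₂ : Q.A)
    (hb₁ : Q.t b₁ ≠ w) (hb₂ : Q.t b₂ ≠ v) (x : Q.A) :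
    leveeSwap hvw ((levee (levee Q Z w b₂ a₂) (leveeZ Q Z w) (.inl ⟨v, hvw⟩) b₁ a₁).h x) =
      (levee (levee Q Z v b₁ a₁) (leveeZ Q Z v) (.inl ⟨w, hvw.symm⟩) b₂ a₂).h x := by
  rw [levee_levee_h hvw _ _ _ _ hb₁, levee_levee_h hvw.symm _ _ _ _ hb₂, leveeSwap_leveeVertex]

theorem leveeSwap_levee_levee_t {v w : Q.V} (hvw : v ≠ w) (b₁ a₁ b₂ a₂ : Q.A)
    (ha₁ : Q.h a₁ ≠ w) (ha₂ : Q.h a₂ ≠ v) (x : Q.A) :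
    leveeSwap hvw ((levee (levee Q Z w b₂ a₂) (leveeZ Q Z w) (.inl ⟨v, hvw⟩) b₁ a₁).t x) =
      (levee (levee Q Z v b₁ a₁) (leveeZ Q Z v) (.inl ⟨w, hvw.symm⟩) b₂ a₂).t x := by
  rw [levee_levee_t hvw _ _ _ _ ha₁, levee_levee_t hvw.symm _ _ _ _ ha₂, leveeSwap_leveeVertex]

end Levee

theorem stmt3_general (Q : Quiv) (Z : Set (Q.A × Q.A))
    (v w : Q.V) (hvw : v ≠ w)
    (b₁ a₁ : Q.A) (hv : (b₁, a₁) ∈ Z ∧ Q.t b₁ = v ∧ Q.h a₁ = v)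
    (b₂ a₂ : Q.A) (hw : (b₂, a₂) ∈ Z ∧ Q.t b₂ = w ∧ Q.h a₂ = w) :
    ∃ e : QuivIso
        (levee (levee Q Z w b₂ a₂) (leveeZ Q Z w) (Sum.inl ⟨v, hvw⟩) b₁ a₁)
        (levee (levee Q Z v b₁ a₁) (leveeZ Q Z v) (Sum.inl ⟨w, hvw.symm⟩) b₂ a₂),
      ∀ p : Q.A × Q.A,
        p ∈ leveeZ (levee Q Z w b₂ a₂) (leveeZ Q Z w) (Sum.inl ⟨v, hvw⟩) ↔
        (e.aEquiv p.1, e.aEquiv p.2) ∈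
          leveeZ (levee Q Z v b₁ a₁) (leveeZ Q Z v) (Sum.inl ⟨w, hvw.symm⟩) := by
  obtain ⟨-, htb₁, hha₁⟩ := hv
  obtain ⟨-, htb₂, hha₂⟩ := hw
  refine ⟨⟨leveeSwap hvw, Equiv.refl Q.A, fun x => ?_, fun x => ?_⟩, fun p => ?_⟩
  · exact (leveeSwap_levee_levee_h hvw _ _ _ _ (htb₁ ▸ hvw) (htb₂ ▸ hvw.symm) x).symm
  · exact (leveeSwap_levee_levee_t hvw _ _ _ _ (hha₁ ▸ hvw) (hha₂ ▸ hvw.symm) x).symm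
  · change _ ↔ (p.1, p.2) ∈ _
    rw [mem_leveeZ_levee, mem_leveeZ_levee]
    tauto

/-- Levees at two distinct relational vertices commute: there is a quiver isomorphism
`(Q^w)^x ≅ (Q^v)^y` (where `x`, `y` are the vertices corresponding to `v`, `w`)
carrying `(Z^w)^x` onto `(Z^v)^y`. -/
theorem stmt3 (Q : Quiv) (Z : Set (Q.A × Q.A)) (lg : LocallyGentle Q Z)
    (v w : Q.V) (hvw : v ≠ w)
    (b₁ a₁ : Q.A) (hv : (b₁, a₁) ∈ Z ∧ Q.t b₁ = v ∧ Q.h a₁ = v)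
    (b₂ a₂ : Q.A) (hw : (b₂, a₂) ∈ Z ∧ Q.t b₂ = w ∧ Q.h a₂ = w) :
    ∃ e : QuivIso
        (levee (levee Q Z w b₂ a₂) (leveeZ Q Z w) (Sum.inl ⟨v, hvw⟩) b₁ a₁)
        (levee (levee Q Z v b₁ a₁) (leveeZ Q Z v) (Sum.inl ⟨w, hvw.symm⟩) b₂ a₂),
      ∀ p : Q.A × Q.A,
        p ∈ leveeZ (levee Q Z w b₂ a₂) (leveeZ Q Z w) (Sum.inl ⟨v, hvw⟩) ↔
        (e.aEquiv p.1, e.aEquiv p.2) ∈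
          leveeZ (levee Q Z v b₁ a₁) (leveeZ Q Z v) (Sum.inl ⟨w, hvw.symm⟩) :=
  stmt3_general Q Z v w hvw b₁ a₁ hv b₂ a₂ hw
end

section
/- Let (Q,Z) be a locally gentle pair with Q finite, let v be a relational vertex, and let (Q^v, Z^v) be the levee at v. Then |Q^v_0| = |Q_0| + 1, |Q^v_1| = |Q_1|, and |Z^v| < |Z|. Consequently, the iterated levee process (Zembyk excision) terminates after at most |Z| steps in a quiver with empty relation set. -/
attribute [local instance] Classical.propDecidable

/-- The levee at a relational vertex adds one vertex, keeps the arrows, and strictly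
decreases the number of relations; hence the iterated levee process terminates. -/
theorem stmt4 (Q : Quiv) [Finite Q.V] [Finite Q.A] (Z : Set (Q.A × Q.A))
    (lg : LocallyGentle Q Z) (v : Q.V) (b a : Q.A)
    (hba : (b, a) ∈ Z) (htb : Q.t b = v) (hha : Q.h a = v) :
    Nat.card (levee Q Z v b a).V = Nat.card Q.V + 1 ∧
    Nat.card (levee Q Z v b a).A = Nat.card Q.A ∧
    Nat.card ↥(leveeZ Q Z v) < Nat.card ↥Z := by
  have := Fintype.ofFinite Q.V
  have := Fintype.ofFinite Q.A
  refine ⟨?_, rfl, ?_⟩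
  · show Nat.card ({u : Q.V // u ≠ v} ⊕ Bool) = _
    rw [Nat.card_sum, Nat.card_eq_fintype_card, Nat.card_eq_fintype_card,
      Nat.card_eq_fintype_card, Fintype.card_subtype_compl (· = v),
      Fintype.card_subtype_eq, Fintype.card_bool]
    have : 1 ≤ Fintype.card Q.V := Fintype.card_pos_iff.mpr ⟨v⟩
    omega
  · rw [Nat.card_coe_set_eq, Nat.card_coe_set_eq]
    refine Set.ncard_lt_ncard ?_ (Set.toFinite Z)
    constructor
    · exact fun p hp => hp.1
    · intro h
      exact (h hba).2.1 htb
end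

section
/- Let (Q,Z) be a gentle pair, i.e. a locally gentle pair having only finitely many admissible paths (equivalently, the quotient algebra is finite-dimensional). Then the Zembyk excision Q^✂(Z), the quiver obtained by iteratively taking levees at relational vertices until no relations remain, is acyclic. -/
attribute [local instance] Classical.propDecidable

/-- A choice, for every relational vertex `v`, of a relation `(b v, a v) ∈ Z` through `v`. -/
structure RelSelection (Q : Quiv) (Z : Set (Q.A × Q.A)) where
  b : Q.V → Q.A
  a : Q.V → Q.A
  spec : ∀ v : Q.V, Relational Q Z v →
    (b v, a v) ∈ Z ∧ Q.t (b v) = v ∧ Q.h (a v) = v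

/-- The Zembyk excision `Q^✂(Z)`: the quiver obtained by simultaneously taking the levee
at every relational vertex (equivalently, by iterating levees until no relation remains;
the result is independent of order).  A relational vertex `u` is replaced by
`u(♯) = Sum.inr (u, true)` and `u(♭) = Sum.inr (u, false)`. -/
noncomputable def excision (Q : Quiv) (Z : Set (Q.A × Q.A)) (s : RelSelection Q Z) : Quiv where
  V := {u : Q.V // ¬ Relational Q Z u} ⊕ ({u : Q.V // Relational Q Z u} × Bool)
  A := Q.A
  h := fun x =>
    if hx : Relational Q Z (Q.h x) then
      Sum.inr (⟨Q.h x, hx⟩, if (s.b (Q.h x), x) ∈ Z then false else true)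
    else Sum.inl ⟨Q.h x, hx⟩
  t := fun x =>
    if hx : Relational Q Z (Q.t x) then
      Sum.inr (⟨Q.t x, hx⟩, if (x, s.a (Q.t x)) ∈ Z then true else false)
    else Sum.inl ⟨Q.t x, hx⟩

/-- A quiver is acyclic when it has no oriented cycle: no nonempty path returning
to its starting vertex. -/
def Acyclic (Q : Quiv) : Prop :=
  ∀ (x : Q.A) (p : List Q.A), Q.IsPath (x :: p) →
    Q.t ((x :: p).getLast (List.cons_ne_nil x p)) ≠ Q.h x

/-!
The arrows of `Q^✂(Z)` are those of `Q`, and two arrows composing in `Q^✂(Z)` compose in `Q`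
without forming a relation: at a relational vertex `v`, a relation `ab ∈ Z` attaches `a` and `b`
to different copies `v(♯)`, `v(♭)` of `v`. Hence an oriented cycle in `Q^✂(Z)` is a cycle of
`Q` all of whose powers are admissible, contradicting finiteness of the admissible paths.
-/

namespace List

variable {α : Type*} {R : α → α → Prop}

theorem IsChain.flatten_replicate {x : α} {l : List α} (h : (x :: l).IsChain R)
    (hcyc : R ((x :: l).getLast (cons_ne_nil x l)) x) (n : ℕ) :
    (replicate n (x :: l)).flatten.IsChain R := by
  induction n with
  | zero => simp
  | succ n ih =>
    rw [replicate_succ, flatten_cons]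
    refine h.append ih fun a ha b hb => ?_
    rw [getLast?_eq_some_getLast (cons_ne_nil x l), Option.mem_some_iff] at ha
    rw [head?_flatten_replicate (by rintro rfl; simp at hb), head?_cons,
      Option.mem_some_iff] at hb
    exact ha ▸ hb ▸ hcyc

theorem infinite_setOf_isChain_of_cycle {x : α} {l : List α} (h : (x :: l).IsChain R)
    (hcyc : R ((x :: l).getLast (cons_ne_nil x l)) x) : {p : List α | p.IsChain R}.Infinite := by
  refine Set.infinite_of_injective_forall_mem (f := fun n => (replicate n (x :: l)).flatten)
    (fun m n hmn => ?_) (h.flatten_replicate hcyc)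
  simpa using congrArg length hmn

end List

def AdmissiblyComposable (Q : Quiv) (Z : Set (Q.A × Q.A)) (a b : Q.A) : Prop :=
  Q.t a = Q.h b ∧ (a, b) ∉ Z

theorem Quiv.isPath_iff_isChain {Q : Quiv} {p : List Q.A} :
    Q.IsPath p ↔ p.IsChain (fun x y => Q.t x = Q.h y) :=
  Iff.rfl

theorem isChain_admissiblyComposable_iff {Q : Quiv} {Z : Set (Q.A × Q.A)} {p : List Q.A} :
    p.IsChain (AdmissiblyComposable Q Z) ↔ Q.IsPath p ∧ p.IsChain (fun x y => (x, y) ∉ Z) := by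
  induction p using List.twoStepInduction with
  | nil => simp [Quiv.isPath_iff_isChain]
  | singleton a => simp [Quiv.isPath_iff_isChain]
  | cons_cons a b l _ ih =>
    simp only [Quiv.isPath_iff_isChain, List.isChain_cons_cons] at ih ⊢
    rw [ih, AdmissiblyComposable]
    tauto

namespace LocallyGentle

variable {Q : Quiv} {Z : Set (Q.A × Q.A)}

/-- By gentleness, both sides say that `ab` is the relation selected at `t a = h b`. -/
theorem mem_selection_a_iff_mem_selection_b (lg : LocallyGentle Q Z) (s : RelSelection Q Z)
    {a b : Q.A} (hab : (a, b) ∈ Z) :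
    (a, s.a (Q.t a)) ∈ Z ↔ (s.b (Q.h b), b) ∈ Z := by
  have hv : Q.t a = Q.h b := lg.comp _ hab
  have hsel : (s.b (Q.h b), s.a (Q.h b)) ∈ Z := (s.spec (Q.h b) ⟨a, b, hab, hv, rfl⟩).1
  rw [hv]
  constructor
  · intro ha
    rwa [← lg.rel_right a b _ hab ha] at hsel
  · intro hb
    rwa [← lg.rel_left b a _ hab hb] at hsel

theorem admissiblyComposable_of_excision (lg : LocallyGentle Q Z) (s : RelSelection Q Z)
    {a b : Q.A} (h : (excision Q Z s).t a = (excision Q Z s).h b) :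
    AdmissiblyComposable Q Z a b := by
  simp only [excision] at h
  by_cases hta : Relational Q Z (Q.t a) <;> by_cases hhb : Relational Q Z (Q.h b) <;>
    simp only [hta, hhb, dite_true, dite_false, reduceCtorEq, Sum.inr.injEq, Sum.inl.injEq,
      Prod.mk.injEq, Subtype.mk.injEq] at h
  · refine ⟨h.1, fun hab => ?_⟩
    have := lg.mem_selection_a_iff_mem_selection_b s hab
    split_ifs at h <;> simp_all
  · exact ⟨h, fun hab => hta ⟨a, b, hab, rfl, h.symm⟩⟩

end LocallyGentle

/-- For a gentle pair (a locally gentle pair with only finitely many admissible paths),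
the Zembyk excision `Q^✂(Z)` is acyclic. -/
theorem stmt5 (Q : Quiv) (Z : Set (Q.A × Q.A)) (lg : LocallyGentle Q Z)
    (hgentle : {p : List Q.A | Q.IsPath p ∧ p.Chain' (fun x y => (x, y) ∉ Z)}.Finite)
    (s : RelSelection Q Z) :
    Acyclic (excision Q Z s) := by
  intro x p hpath hcyc
  have hinf : {p : List Q.A | p.IsChain (AdmissiblyComposable Q Z)}.Infinite :=
    List.infinite_setOf_isChain_of_cycle
      (hpath.imp fun _ _ => lg.admissiblyComposable_of_excision s)
      (lg.admissiblyComposable_of_excision s hcyc)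
  simp only [isChain_admissiblyComposable_iff] at hinf
  exact hgentle.not_infinite hinf
end

section
/- Let (Q,Z) be a gentle pair, K a division ring, sigma : Q_1 -> Aut(K), Lambda = K_sigma Q / <Z> the semilinear gentle algebra, and Gamma = K_{sigma'} Q^✂(Z) the semilinear path algebra of the Zembyk excision with sigma'_{a'} = sigma_a. Then there is an injective homomorphism of K-rings Delta : Lambda -> Gamma, defined on generators by e_v + <Z> ↦ e_{v'} for v non-relational, e_u + <Z> ↦ e_{u(sharp)} + e_{u(flat)} for u relational, and a + <Z> ↦ a' for each arrow a. Moreover the kernel of the induced map K_sigma Q -> Gamma is exactly <Z>. -/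
/-!
A family of elements of a ring satisfying the defining relations of `K_σ Q` is the image of a
ring map out of `K_σ Q`: the path basis defines the map additively, and the relations make it
multiplicative on basis elements. In `Γ = K_σ Q^✂(Z)` the elements `e_{v'}`, resp.
`e_{u♯} + e_{u♭}`, together with the arrows satisfy these relations, which gives `Δ`.

Two composable arrows `x y` of `Q` still compose in `Q^✂(Z)` exactly when `(x, y) ∉ Z`.
Hence `Δ` kills `⟨Z⟩`, and it sends the paths of `Q` avoiding `Z` to distinct paths of
`Q^✂(Z)` and the trivial paths to sums of distinct trivial paths. Reading off coordinates in
the path basis of `Γ`, an element killed by `Δ` has nonzero coordinates only on paths through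
`Z`, so it lies in `⟨Z⟩`.
-/

attribute [local instance] Classical.propDecidable

/-- A presentation of the semilinear path algebra `K_σ Q` on a ring `Λ`:
a `K`-ring structure `ι`, trivial paths `e v`, arrows `ar x`, the defining relations,
and freeness: the paths of `Q` (trivial and nontrivial) form a left `K`-basis. -/
structure SLPA (K : Type) [DivisionRing K] (Q : Quiv) [Fintype Q.V]
    (σ : Q.A → K ≃+* K) (Λ : Type) [Ring Λ] where
  ι : K →+* Λ
  e : Q.V → Λ
  ar : Q.A → Λ
  sum_e : (∑ v : Q.V, e v) = 1
  e_idem : ∀ v : Q.V, e v * e v = e v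
  e_orth : ∀ u v : Q.V, u ≠ v → e u * e v = 0
  e_comm : ∀ (v : Q.V) (lam : K), e v * ι lam = ι lam * e v
  he_ar : ∀ x : Q.A, e (Q.h x) * ar x = ar x
  ar_te : ∀ x : Q.A, ar x * e (Q.t x) = ar x
  semilinear : ∀ (x : Q.A) (lam : K), ar x * ι lam = ι (σ x lam) * ar x
  free : Function.Bijective
    (fun c : (Q.V ⊕ {p : List Q.A // p ≠ [] ∧ Q.IsPath p}) →₀ K =>
      c.sum fun p lam => ι lam * Sum.elim e (fun q => (q.1.map ar).prod) p)

lemma List.exists_eq_append_of_not_isChain {α : Type*} {R : α → α → Prop} {l : List α}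
    (h : ¬ l.IsChain R) : ∃ l₁ a b l₂, l = l₁ ++ a :: b :: l₂ ∧ ¬ R a b := by
  simp only [List.isChain_iff_forall_rel_of_append_cons_cons, not_forall, exists_prop] at h
  obtain ⟨a, b, l₁, l₂, rfl, hab⟩ := h
  exact ⟨l₁, a, b, l₂, rfl, hab⟩

abbrev Quiv.Paths (Q : Quiv) : Type := Q.V ⊕ {p : List Q.A // p ≠ [] ∧ Q.IsPath p}

/-- Elements of a ring `Γ` satisfying the defining relations of `K_σ Q`. -/
structure SLRep (K : Type) [DivisionRing K] (Q : Quiv) [Fintype Q.V]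
    (σ : Q.A → K ≃+* K) (Γ : Type) [Ring Γ] where
  ι : K →+* Γ
  e : Q.V → Γ
  ar : Q.A → Γ
  sum_e : (∑ v : Q.V, e v) = 1
  e_idem : ∀ v : Q.V, e v * e v = e v
  e_orth : ∀ u v : Q.V, u ≠ v → e u * e v = 0
  e_comm : ∀ (v : Q.V) (lam : K), e v * ι lam = ι lam * e v
  he_ar : ∀ x : Q.A, e (Q.h x) * ar x = ar x
  ar_te : ∀ x : Q.A, ar x * e (Q.t x) = ar x
  semilinear : ∀ (x : Q.A) (lam : K), ar x * ι lam = ι (σ x lam) * ar x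

def SLPA.toRep {K : Type} [DivisionRing K] {Q : Quiv} [Fintype Q.V] {σ : Q.A → K ≃+* K}
    {Λ : Type} [Ring Λ] (S : SLPA K Q σ Λ) : SLRep K Q σ Λ :=
  { S with }

/-- How the scalars move past a path: `p * ι lam = ι (twist σ p lam) * p`. -/
def twist {K : Type} [DivisionRing K] {Q : Quiv} (σ : Q.A → K ≃+* K) : Q.Paths → K → K :=
  Sum.elim (fun _ => id) (fun q lam => q.1.foldr (fun x l => σ x l) lam)

namespace SLRep

variable {K : Type} [DivisionRing K] {Q Q' : Quiv} [Fintype Q.V] [Fintype Q'.V]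
  {σ : Q.A → K ≃+* K} {σ' : Q'.A → K ≃+* K} {Γ : Type} [Ring Γ] (R : SLRep K Q σ Γ)

def path (p : List Q.A) : Γ := (p.map R.ar).prod

@[simp] lemma path_nil : R.path [] = 1 := rfl

lemma path_cons (x : Q.A) (p : List Q.A) : R.path (x :: p) = R.ar x * R.path p := by
  simp [path]

lemma path_append (p q : List Q.A) : R.path (p ++ q) = R.path p * R.path q := by
  simp [path]

def mono : Q.Paths → Γ := Sum.elim R.e fun q => R.path q.1

lemma e_mul_e (u v : Q.V) : R.e u * R.e v = if u = v then R.e u else 0 := by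
  split_ifs with h
  · subst h; exact R.e_idem u
  · exact R.e_orth u v h

lemma sum_e_mul_e (A : Finset Q.V) (v : Q.V) :
    (∑ u ∈ A, R.e u) * R.e v = if v ∈ A then R.e v else 0 := by
  simp [Finset.sum_mul, R.e_mul_e]

lemma e_mul_sum_e (A : Finset Q.V) (v : Q.V) :
    R.e v * (∑ u ∈ A, R.e u) = if v ∈ A then R.e v else 0 := by
  simp [Finset.mul_sum, R.e_mul_e]

lemma sum_e_mul_sum_e (A B : Finset Q.V) :
    (∑ u ∈ A, R.e u) * (∑ v ∈ B, R.e v) = ∑ v ∈ A ∩ B, R.e v := by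
  rw [Finset.mul_sum, Finset.inter_comm, ← Finset.filter_mem_eq_inter, Finset.sum_filter]
  simp only [R.sum_e_mul_e]

lemma e_mul_ar (v : Q.V) (x : Q.A) : R.e v * R.ar x = if Q.h x = v then R.ar x else 0 := by
  split_ifs with h
  · subst h; exact R.he_ar x
  · rw [← R.he_ar x, ← mul_assoc, R.e_orth _ _ (Ne.symm h), zero_mul]

lemma ar_mul_e (x : Q.A) (v : Q.V) : R.ar x * R.e v = if Q.t x = v then R.ar x else 0 := by
  split_ifs with h
  · subst h; exact R.ar_te x
  · rw [← R.ar_te x, mul_assoc, R.e_orth _ _ h, mul_zero]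

lemma ar_mul_ar_of_ne {x y : Q.A} (h : Q.t x ≠ Q.h y) : R.ar x * R.ar y = 0 := by
  rw [← R.he_ar y, ← mul_assoc, R.ar_mul_e, if_neg h, zero_mul]

lemma path_eq_zero {p : List Q.A} (hp : ¬ Q.IsPath p) : R.path p = 0 := by
  obtain ⟨l₁, x, y, l₂, rfl, hxy⟩ := List.exists_eq_append_of_not_isChain hp
  rw [path_append, path_cons, path_cons, ← mul_assoc (R.ar x), R.ar_mul_ar_of_ne hxy, zero_mul,
    mul_zero]

lemma e_mul_path {p : List Q.A} (hp : p ≠ []) (v : Q.V) :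
    R.e v * R.path p = if Q.h (p.head hp) = v then R.path p else 0 := by
  obtain ⟨x, p, rfl⟩ := List.exists_cons_of_ne_nil hp
  rw [path_cons, ← mul_assoc, e_mul_ar, List.head_cons]
  split_ifs <;> simp

lemma path_mul_e {p : List Q.A} (hp : p ≠ []) (v : Q.V) :
    R.path p * R.e v = if Q.t (p.getLast hp) = v then R.path p else 0 := by
  have hsplit : R.path p = R.path p.dropLast * R.ar (p.getLast hp) := by
    conv_lhs => rw [← List.dropLast_append_getLast hp]
    rw [path_append, path_cons, path_nil, mul_one]
  rw [hsplit, mul_assoc, ar_mul_e]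
  split_ifs <;> simp

lemma path_mul_ι (p : List Q.A) (lam : K) :
    R.path p * R.ι lam = R.ι (p.foldr (fun x l => σ x l) lam) * R.path p := by
  induction p with
  | nil => simp
  | cons x p ih => rw [path_cons, mul_assoc, ih, ← mul_assoc, R.semilinear, mul_assoc,
      List.foldr_cons]

lemma mono_mul_ι (p : Q.Paths) (lam : K) :
    R.mono p * R.ι lam = R.ι (twist σ p lam) * R.mono p :=
  match p with
  | .inl v => R.e_comm v lam
  | .inr q => R.path_mul_ι q.1 lam

lemma ι_mul_mono_mul_ι_mul_mono (a b : K) (p q : Q.Paths) :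
    R.ι a * R.mono p * (R.ι b * R.mono q) = R.ι (a * twist σ p b) * (R.mono p * R.mono q) := by
  rw [map_mul, ← mul_assoc, mul_assoc _ (R.mono p), R.mono_mul_ι]
  simp only [mul_assoc]

noncomputable def eval : (Q.Paths →₀ K) →+ Γ :=
  Finsupp.liftAddHom fun p => (AddMonoidHom.mulRight (R.mono p)).comp R.ι.toAddMonoidHom

lemma eval_single (p : Q.Paths) (lam : K) :
    R.eval (Finsupp.single p lam) = R.ι lam * R.mono p :=
  Finsupp.liftAddHom_apply_single _ _ _

lemma eval_smul (lam : K) (c : Q.Paths →₀ K) : R.eval (lam • c) = R.ι lam * R.eval c := by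
  induction c using Finsupp.induction_linear with
  | zero => simp
  | add c d hc hd => rw [smul_add, map_add, map_add, hc, hd, mul_add]
  | single p a => rw [Finsupp.smul_single, eval_single, eval_single, smul_eq_mul, map_mul,
      mul_assoc]

noncomputable def comap (R : SLRep K Q' σ' Γ) (π : Q'.V → Q.V) (f : Q.A → Q'.A)
    (hh : ∀ x, π (Q'.h (f x)) = Q.h x) (ht : ∀ x, π (Q'.t (f x)) = Q.t x)
    (hσ : ∀ x, σ' (f x) = σ x) : SLRep K Q σ Γ where
  ι := R.ι
  e v := ∑ w with π w = v, R.e w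
  ar x := R.ar (f x)
  sum_e := (Finset.sum_fiberwise _ π R.e).trans R.sum_e
  e_idem v := by rw [R.sum_e_mul_sum_e, Finset.inter_self]
  e_orth u v huv := by
    rw [R.sum_e_mul_sum_e]
    refine Finset.sum_eq_zero fun w hw => absurd ?_ huv
    simp only [Finset.mem_inter, Finset.mem_filter] at hw
    exact hw.1.2.symm.trans hw.2.2
  e_comm v lam := by simp only [Finset.sum_mul, Finset.mul_sum, R.e_comm]
  he_ar x := by
    rw [← R.he_ar (f x), ← mul_assoc, R.sum_e_mul_e, if_pos (by simp [hh])]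
  ar_te x := by
    rw [← R.ar_te (f x), mul_assoc, R.e_mul_sum_e, if_pos (by simp [ht])]
  semilinear x lam := by rw [R.semilinear, hσ]

end SLRep

namespace SLPA

variable {K : Type} [DivisionRing K] {Q : Quiv} [Fintype Q.V] {σ : Q.A → K ≃+* K}
  {Λ Γ : Type} [Ring Λ] [Ring Γ] (S : SLPA K Q σ Λ) (R : SLRep K Q σ Γ)

lemma eval_bijective : Function.Bijective S.toRep.eval := S.free

noncomputable def coords : Λ ≃+ (Q.Paths →₀ K) :=
  (AddEquiv.ofBijective S.toRep.eval S.eval_bijective).symm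

lemma eval_coords (y : Λ) : S.toRep.eval (S.coords y) = y :=
  (AddEquiv.ofBijective _ S.eval_bijective).apply_symm_apply y

noncomputable def liftAddHom : Λ →+ Γ := R.eval.comp S.coords.toAddMonoidHom

lemma liftAddHom_eval (c : Q.Paths →₀ K) : S.liftAddHom R (S.toRep.eval c) = R.eval c :=
  congrArg R.eval ((AddEquiv.ofBijective _ S.eval_bijective).symm_apply_apply c)

lemma liftAddHom_mono (p : Q.Paths) : S.liftAddHom R (S.toRep.mono p) = R.mono p := by
  simpa [SLRep.eval_single] using S.liftAddHom_eval R (Finsupp.single p 1)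

lemma liftAddHom_one : S.liftAddHom R 1 = 1 := by
  rw [← S.sum_e, ← R.sum_e, map_sum]
  exact Finset.sum_congr rfl fun v _ => S.liftAddHom_mono R (.inl v)

lemma liftAddHom_path (p : List Q.A) : S.liftAddHom R (S.toRep.path p) = R.path p := by
  by_cases hp : Q.IsPath p
  · rcases eq_or_ne p [] with rfl | hne
    · exact S.liftAddHom_one R
    · exact S.liftAddHom_mono R (.inr ⟨p, hne, hp⟩)
  · rw [S.toRep.path_eq_zero hp, R.path_eq_zero hp, map_zero]

lemma liftAddHom_ι_mul (lam : K) (y : Λ) :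
    S.liftAddHom R (S.toRep.ι lam * y) = R.ι lam * S.liftAddHom R y := by
  rw [← S.eval_coords y, ← S.toRep.eval_smul, S.liftAddHom_eval, S.liftAddHom_eval,
    R.eval_smul]

lemma liftAddHom_mono_mul (p q : Q.Paths) :
    S.liftAddHom R (S.toRep.mono p * S.toRep.mono q) = R.mono p * R.mono q := by
  rcases p with u | ⟨p, hp, -⟩ <;> rcases q with v | ⟨q, hq, -⟩ <;>
    simp only [SLRep.mono, Sum.elim_inl, Sum.elim_inr]
  · rw [SLRep.e_mul_e, SLRep.e_mul_e]
    split_ifs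
    exacts [S.liftAddHom_mono R (.inl u), map_zero _]
  · rw [SLRep.e_mul_path _ hq, SLRep.e_mul_path _ hq]
    split_ifs
    exacts [S.liftAddHom_path R q, map_zero _]
  · rw [SLRep.path_mul_e _ hp, SLRep.path_mul_e _ hp]
    split_ifs
    exacts [S.liftAddHom_path R p, map_zero _]
  · rw [← SLRep.path_append, ← SLRep.path_append]
    exact S.liftAddHom_path R _

lemma liftAddHom_mul (y z : Λ) :
    S.liftAddHom R (y * z) = S.liftAddHom R y * S.liftAddHom R z := by
  rw [← S.eval_coords y, ← S.eval_coords z]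
  induction S.coords y using Finsupp.induction_linear with
  | zero => simp
  | add c c' hc hc' => simp only [map_add, add_mul, hc, hc']
  | single p a =>
    induction S.coords z using Finsupp.induction_linear with
    | zero => simp
    | add d d' hd hd' => simp only [map_add, mul_add, hd, hd']
    | single q b =>
      rw [S.liftAddHom_eval, S.liftAddHom_eval, SLRep.eval_single, SLRep.eval_single,
        SLRep.eval_single, SLRep.eval_single, SLRep.ι_mul_mono_mul_ι_mul_mono,
        R.ι_mul_mono_mul_ι_mul_mono, S.liftAddHom_ι_mul, S.liftAddHom_mono_mul]

/-- The universal property of `K_σ Q`: the ring map to any ring with elements satisfying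
its defining relations. -/
noncomputable def lift : Λ →+* Γ :=
  { S.liftAddHom R with
    map_one' := S.liftAddHom_one R
    map_mul' := S.liftAddHom_mul R }

lemma lift_ι (lam : K) : S.lift R (S.ι lam) = R.ι lam := by
  show S.liftAddHom R (S.toRep.ι lam) = R.ι lam
  simpa [lift, liftAddHom_one] using S.liftAddHom_ι_mul R lam 1

lemma lift_e (v : Q.V) : S.lift R (S.e v) = R.e v := S.liftAddHom_mono R (.inl v)

lemma lift_ar (x : Q.A) : S.lift R (S.ar x) = R.ar x := by
  show S.liftAddHom R (S.toRep.ar x) = R.ar x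
  simpa [SLRep.path] using S.liftAddHom_path R [x]

end SLPA

section Excision

variable {Q : Quiv} {Z : Set (Q.A × Q.A)}

def excisionProj (s : RelSelection Q Z) : (excision Q Z s).V → Q.V :=
  Sum.elim Subtype.val fun w => w.1.1

lemma excisionProj_h (s : RelSelection Q Z) (x : Q.A) :
    excisionProj s ((excision Q Z s).h x) = Q.h x := by
  simp only [excision]
  split <;> rfl

lemma excisionProj_t (s : RelSelection Q Z) (x : Q.A) :
    excisionProj s ((excision Q Z s).t x) = Q.t x := by
  simp only [excision]
  split <;> rfl

lemma excisionProj_surjective (s : RelSelection Q Z) : Function.Surjective (excisionProj s) :=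
  fun v =>
    if h : Relational Q Z v then ⟨.inr (⟨v, h⟩, true), rfl⟩ else ⟨.inl ⟨v, h⟩, rfl⟩

lemma Quiv.IsPath.of_excision {s : RelSelection Q Z} {p : List Q.A}
    (hp : (excision Q Z s).IsPath p) : Q.IsPath p :=
  List.IsChain.imp (fun x y hxy => by rw [← excisionProj_t s, hxy, excisionProj_h]) hp

lemma excision_t_eq_h_iff (lg : LocallyGentle Q Z) (s : RelSelection Q Z) {x y : Q.A}
    (hxy : Q.t x = Q.h y) : (excision Q Z s).t x = (excision Q Z s).h y ↔ (x, y) ∉ Z := by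
  simp only [excision]
  rw [hxy]
  by_cases hv : Relational Q Z (Q.h y)
  · obtain ⟨hsZ, hst, -⟩ := s.spec _ hv
    simp only [dif_pos hv, Sum.inr.injEq, Prod.mk.injEq, true_and]
    have hA : (x, s.a (Q.h y)) ∈ Z ↔ x = s.b (Q.h y) :=
      ⟨fun h => lg.rel_left _ _ _ h hsZ, fun h => h ▸ hsZ⟩
    by_cases hC : (x, y) ∈ Z
    · have hB : (s.b (Q.h y), y) ∈ Z ↔ x = s.b (Q.h y) :=
        ⟨fun h => lg.rel_left _ _ _ hC h, fun h => h ▸ hC⟩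
      by_cases x = s.b (Q.h y) <;> simp [*]
    · have hB : (s.b (Q.h y), y) ∈ Z ↔ x ≠ s.b (Q.h y) :=
        ⟨fun h hx => hC (hx ▸ h),
          fun h => by_contra fun hB => h (lg.adm_left y x _ hxy hst hC hB)⟩
      by_cases x = s.b (Q.h y) <;> simp [*]
  · simp only [dif_neg hv, true_iff]
    exact fun hZ => hv ⟨x, y, hZ, hxy, rfl⟩

def excisionPathsProj (s : RelSelection Q Z) : (excision Q Z s).Paths → Q.Paths :=
  Sum.map (excisionProj s) fun q => ⟨q.1, q.2.1, q.2.2.of_excision⟩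

end Excision

section RelIdeal

variable {K : Type} [DivisionRing K] {Q : Quiv} [Fintype Q.V] {Z : Set (Q.A × Q.A)}
  {σ : Q.A → K ≃+* K} {s : RelSelection Q Z} {Λ : Type} [Ring Λ]

/-- The ideal `⟨Z⟩` of `K_σ Q`. -/
def SLPA.relIdeal (S : SLPA K Q σ Λ) (Z : Set (Q.A × Q.A)) : Ideal Λ :=
  Ideal.span {z : Λ | ∃ p ∈ Z, ∃ u : Λ, z = S.ar p.1 * S.ar p.2 * u}

lemma SLPA.path_mem_relIdeal (lg : LocallyGentle Q Z) (S : SLPA K Q σ Λ) {p : List Q.A}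
    (hp : Q.IsPath p) (hp' : ¬ (excision Q Z s).IsPath p) : S.toRep.path p ∈ S.relIdeal Z := by
  obtain ⟨l₁, x, y, l₂, rfl, hxy⟩ := List.exists_eq_append_of_not_isChain (α := Q.A) hp'
  have hZ : (x, y) ∈ Z := by
    by_contra hZ
    exact hxy ((excision_t_eq_h_iff lg s
      (List.isChain_iff_forall_rel_of_append_cons_cons.mp hp rfl)).mpr hZ)
  rw [SLRep.path_append, SLRep.path_cons, SLRep.path_cons, ← mul_assoc (S.toRep.ar x)]
  exact Ideal.mul_mem_left _ _ (Ideal.subset_span ⟨(x, y), hZ, _, rfl⟩)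

lemma SLPA.mono_mem_relIdeal (lg : LocallyGentle Q Z) (S : SLPA K Q σ Λ) {p : Q.Paths}
    (hp : p ∉ Set.range (excisionPathsProj s)) : S.toRep.mono p ∈ S.relIdeal Z := by
  rcases p with v | q
  · obtain ⟨w, rfl⟩ := excisionProj_surjective s v
    exact absurd ⟨.inl w, rfl⟩ hp
  · by_cases hq : (excision Q Z s).IsPath q.1
    · exact absurd ⟨.inr ⟨q.1, q.2.1, hq⟩, rfl⟩ hp
    · exact S.path_mem_relIdeal lg q.2.2 hq

end RelIdeal

section Kernel

variable {K : Type} [DivisionRing K] {Q : Quiv} {Z : Set (Q.A × Q.A)} {s : RelSelection Q Z}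
  [Fintype (excision Q Z s).V]

/-- The coordinates of the image of `ι a * p` in the path basis of `K_σ Q^✂(Z)`. -/
noncomputable def excisionCoeff (s : RelSelection Q Z) [Fintype (excision Q Z s).V] :
    Q.Paths → K → ((excision Q Z s).Paths →₀ K)
  | .inl v, a => ∑ w with excisionProj s w = v, Finsupp.single (.inl w) a
  | .inr q, a =>
    if h : (excision Q Z s).IsPath q.1 then Finsupp.single (.inr ⟨q.1, q.2.1, h⟩) a else 0

lemma excisionCoeff_apply (p : Q.Paths) (a : K) (w : (excision Q Z s).Paths) :
    excisionCoeff s p a w = if p = excisionPathsProj s w then a else 0 := by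
  rcases p with v | q <;> rcases w with w | w
  · simp [excisionCoeff, excisionPathsProj, Finsupp.finsetSum_apply, Finsupp.single_apply,
      eq_comm]
  · simp [excisionCoeff, excisionPathsProj, Finsupp.finsetSum_apply]
  · simp [excisionCoeff, excisionPathsProj]
    split_ifs <;> simp
  · obtain ⟨l, hl⟩ := q
    obtain ⟨m, hm⟩ := w
    by_cases hlm : l = m
    · subst hlm
      simp [excisionCoeff, excisionPathsProj, hm.2]
    · have hne : (Sum.inr ⟨l, hl⟩ : Q.Paths) ≠ Sum.inr ⟨m, hm.1, hm.2.of_excision⟩ :=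
        fun h => hlm (congrArg Subtype.val (Sum.inr.inj h))
      dsimp only [excisionCoeff, excisionPathsProj, Sum.map_inr]
      refine Eq.trans ?_ (if_neg hne).symm
      split_ifs
      · exact Finsupp.single_eq_of_ne fun h => hlm (congrArg Subtype.val (Sum.inr.inj h)).symm
      · rfl

lemma sum_excisionCoeff_apply (c : Q.Paths →₀ K) (w : (excision Q Z s).Paths) :
    c.sum (excisionCoeff s) w = c (excisionPathsProj s w) := by
  rw [Finsupp.sum_apply]
  simp only [excisionCoeff_apply]
  exact Finsupp.sum_ite_self_eq' c _

variable [Fintype Q.V] {σ : Q.A → K ≃+* K} {Λ Γ : Type} [Ring Λ] [Ring Γ]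

noncomputable def excisionRep (R : SLRep K (excision Q Z s) σ Γ) : SLRep K Q σ Γ :=
  R.comap (excisionProj s) id (excisionProj_h s) (excisionProj_t s) fun _ => rfl

lemma excisionRep_e (R : SLRep K (excision Q Z s) σ Γ) (v : Q.V) :
    (excisionRep R).e v =
      if h : Relational Q Z v then
        R.e (Sum.inr (⟨v, h⟩, true)) + R.e (Sum.inr (⟨v, h⟩, false))
      else R.e (Sum.inl ⟨v, h⟩) := by
  show ∑ w with excisionProj s w = v, R.e w = _
  split_ifs with h
  · refine Finset.sum_eq_add_of_mem _ _ (Finset.mem_filter.mpr ⟨Finset.mem_univ _, rfl⟩)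
      (Finset.mem_filter.mpr ⟨Finset.mem_univ _, rfl⟩) (fun h => by cases h)
      fun w hw hne => ?_
    rcases w with ⟨u, hu⟩ | ⟨⟨u, hu⟩, b⟩
    · have hwv : u = v := (Finset.mem_filter.mp hw).2
      exact absurd (hwv ▸ h) hu
    · have hwv : u = v := (Finset.mem_filter.mp hw).2
      subst hwv
      cases b
      exacts [absurd rfl hne.2, absurd rfl hne.1]
  · refine Finset.sum_eq_single_of_mem _ (Finset.mem_filter.mpr ⟨Finset.mem_univ _, rfl⟩)
      fun w hw hne => ?_
    rcases w with ⟨u, hu⟩ | ⟨⟨u, hu⟩, b⟩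
    · have hwv : u = v := (Finset.mem_filter.mp hw).2
      subst hwv
      exact absurd rfl hne
    · have hwv : u = v := (Finset.mem_filter.mp hw).2
      exact absurd (hwv ▸ hu) h

lemma eval_excisionCoeff (R : SLRep K (excision Q Z s) σ Γ) (p : Q.Paths) (a : K) :
    R.eval (excisionCoeff s p a) = R.ι a * (excisionRep R).mono p := by
  rcases p with v | q
  · refine (map_sum R.eval _ _).trans ?_
    exact (Finset.sum_congr rfl fun w _ => R.eval_single _ _).trans (Finset.mul_sum ..).symm
  · by_cases h : (excision Q Z s).IsPath q.1
    · simp only [excisionCoeff, dif_pos h]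
      exact R.eval_single _ _
    · simp only [excisionCoeff, dif_neg h, map_zero]
      exact (mul_eq_zero_of_right _ (R.path_eq_zero h)).symm

lemma excisionRep_eval (R : SLRep K (excision Q Z s) σ Γ) (c : Q.Paths →₀ K) :
    (excisionRep R).eval c = R.eval (c.sum (excisionCoeff s)) := by
  rw [map_finsuppSum, SLRep.eval, Finsupp.liftAddHom_apply]
  exact Finsupp.sum_congr fun p _ => (eval_excisionCoeff R p _).symm

lemma SLPA.relIdeal_le_ker (lg : LocallyGentle Q Z) (S : SLPA K Q σ Λ)
    (T : SLPA K (excision Q Z s) σ Γ) :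
    S.relIdeal Z ≤ RingHom.ker (S.lift (excisionRep T.toRep)) := by
  refine Ideal.span_le.mpr ?_
  rintro _ ⟨⟨b, a⟩, hZ, u, rfl⟩
  have hba : (excision Q Z s).t b ≠ (excision Q Z s).h a :=
    fun h => (excision_t_eq_h_iff lg s (lg.comp _ hZ)).mp h hZ
  have h0 : (excisionRep T.toRep).ar b * (excisionRep T.toRep).ar a = 0 :=
    T.toRep.ar_mul_ar_of_ne hba
  rw [SetLike.mem_coe, RingHom.mem_ker, map_mul, map_mul, SLPA.lift_ar, SLPA.lift_ar, h0,
    zero_mul]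

lemma SLPA.mem_relIdeal_of_lift_eq_zero (lg : LocallyGentle Q Z) (S : SLPA K Q σ Λ)
    (T : SLPA K (excision Q Z s) σ Γ) {y : Λ} (hy : S.lift (excisionRep T.toRep) y = 0) :
    y ∈ S.relIdeal Z := by
  have hc : ∀ w, S.coords y (excisionPathsProj s w) = 0 := by
    have h0 : (S.coords y).sum (excisionCoeff s) = 0 := T.eval_bijective.injective <| by
      rw [map_zero, ← excisionRep_eval, ← S.liftAddHom_eval, S.eval_coords]
      exact hy
    intro w
    rw [← sum_excisionCoeff_apply, h0, Finsupp.zero_apply]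
  rw [← S.eval_coords y, SLRep.eval, Finsupp.liftAddHom_apply]
  refine Ideal.sum_mem _ fun p hp =>
    Ideal.mul_mem_left _ _ (S.mono_mem_relIdeal (s := s) lg ?_)
  rintro ⟨w, rfl⟩
  exact Finsupp.mem_support_iff.mp hp (hc w)

end Kernel

theorem stmt9_general (K : Type) [DivisionRing K] (Q : Quiv) [Fintype Q.V]
    (Z : Set (Q.A × Q.A)) (lg : LocallyGentle Q Z)
    (σ : Q.A → K ≃+* K) (s : RelSelection Q Z)
    (Λfree Γ : Type) [Ring Λfree] [Ring Γ]
    (S : SLPA K Q σ Λfree)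
    [Fintype (excision Q Z s).V]
    (T : SLPA K (excision Q Z s) σ Γ) :
    ∃ φ : Λfree →+* Γ,
      (∀ lam : K, φ (S.ι lam) = T.ι lam) ∧
      (∀ x : Q.A, φ (S.ar x) = T.ar x) ∧
      (∀ v : Q.V, φ (S.e v) =
        if h : Relational Q Z v then
          T.e (Sum.inr (⟨v, h⟩, true)) + T.e (Sum.inr (⟨v, h⟩, false))
        else T.e (Sum.inl ⟨v, h⟩)) ∧
      (∀ y : Λfree, φ y = 0 ↔
        y ∈ Ideal.span {z : Λfree | ∃ p ∈ Z, ∃ u : Λfree, z = S.ar p.1 * S.ar p.2 * u}) :=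
  ⟨S.lift (excisionRep T.toRep), S.lift_ι _, S.lift_ar _,
    fun v => (S.lift_e _ v).trans (excisionRep_e T.toRep v),
    fun _ => ⟨S.mem_relIdeal_of_lift_eq_zero lg T, fun hy => S.relIdeal_le_ker lg T hy⟩⟩

/-- For a gentle pair `(Q,Z)`, there is a homomorphism of `K`-rings from the semilinear
path algebra `K_σ Q` to `Γ = K_{σ'} Q^✂(Z)` sending `e_v ↦ e_{v'}` for `v` non-relational,
`e_u ↦ e_{u(♯)} + e_{u(♭)}` for `u` relational, and `a ↦ a'`, whose kernel is exactly
`⟨Z⟩`; hence it induces an injective `K`-ring homomorphism `Λ = K_σ Q/⟨Z⟩ → Γ`. -/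
theorem stmt9 (K : Type) [DivisionRing K] (Q : Quiv) [Fintype Q.V] [Finite Q.A]
    (Z : Set (Q.A × Q.A)) (lg : LocallyGentle Q Z)
    (hgentle : {p : List Q.A | Q.IsPath p ∧ p.Chain' (fun x y => (x, y) ∉ Z)}.Finite)
    (σ : Q.A → K ≃+* K) (s : RelSelection Q Z)
    (Λfree Γ : Type) [Ring Λfree] [Ring Γ]
    (S : SLPA K Q σ Λfree)
    [Fintype (excision Q Z s).V]
    (T : SLPA K (excision Q Z s) σ Γ) :
    ∃ φ : Λfree →+* Γ,
      (∀ lam : K, φ (S.ι lam) = T.ι lam) ∧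
      (∀ x : Q.A, φ (S.ar x) = T.ar x) ∧
      (∀ v : Q.V, φ (S.e v) =
        if h : Relational Q Z v then
          T.e (Sum.inr (⟨v, h⟩, true)) + T.e (Sum.inr (⟨v, h⟩, false))
        else T.e (Sum.inl ⟨v, h⟩)) ∧
      (∀ y : Λfree, φ y = 0 ↔
        y ∈ Ideal.span {z : Λfree | ∃ p ∈ Z, ∃ u : Λfree, z = S.ar p.1 * S.ar p.2 * u}) :=
  stmt9_general K Q Z lg σ s Λfree Γ S T
end

section
/- Let Lambda = K_sigma Q/<Z> be a finite-dimensional semilinear gentle algebra with embedding Delta into Gamma = K_{sigma'}Q^✂(Z). For a vertex v of Q, let U = Lambda e_v / A e_v be the corresponding simple left Lambda-module (A the arrow ideal). Then the K-dimension of (Gamma/rad Gamma) ⊗_{Lambda/rad Lambda} U is 1 if v is non-relational, and 2 if v is relational. In particular Gamma ⊗_Lambda U has length at most 2. -/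
attribute [local instance] Classical.propDecidable

/-- A presentation of the semilinear (locally) gentle algebra `K_σ Q / ⟨Z⟩` on a ring `Λ`:
the semilinear path algebra relations, the zero-relations from `Z`, and freeness:
the `Z`-avoiding (admissible) paths form a left `K`-basis. -/
structure GentlePres (K : Type) [DivisionRing K] (Q : Quiv) [Fintype Q.V]
    (σ : Q.A → K ≃+* K) (Z : Set (Q.A × Q.A)) (Λ : Type) [Ring Λ] where
  ι : K →+* Λ
  e : Q.V → Λ
  ar : Q.A → Λ
  sum_e : (∑ v : Q.V, e v) = 1
  e_idem : ∀ v : Q.V, e v * e v = e v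
  e_orth : ∀ u v : Q.V, u ≠ v → e u * e v = 0
  e_comm : ∀ (v : Q.V) (lam : K), e v * ι lam = ι lam * e v
  he_ar : ∀ x : Q.A, e (Q.h x) * ar x = ar x
  ar_te : ∀ x : Q.A, ar x * e (Q.t x) = ar x
  semilinear : ∀ (x : Q.A) (lam : K), ar x * ι lam = ι (σ x lam) * ar x
  rel : ∀ p ∈ Z, ar p.1 * ar p.2 = 0
  free : Function.Bijective
    (fun c : (Q.V ⊕ {p : List Q.A // p ≠ [] ∧ Q.IsPath p ∧
        p.Chain' (fun x y => (x, y) ∉ Z)}) →₀ K =>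
      c.sum fun p lam => ι lam * Sum.elim e (fun q => (q.1.map ar).prod) p)

/-- The Jacobson radical of a ring, via its quasi-regularity characterisation:
`x ∈ rad R` iff `1 - y*x` is a unit for every `y`. -/
def radSet (R : Type) [Ring R] : Set R := {x : R | ∀ y : R, IsUnit (1 - y * x)}

/-!
Every path of `Q^✂(Z)` is a `Z`-avoiding path of `Q`, so the paths of `Γ` have bounded length and
the arrow ideal of `Γ` is nilpotent, hence inside the radical. Conversely an element of the radical
has zero coefficient at every trivial path (otherwise a suitable `1 - y x` would fail to be a
unit), so the radical is exactly the arrow ideal and the classes of the vertex idempotents are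
linearly independent modulo it. Since `Δ(e_v)` is the sum of the idempotents of the one or two
vertices of `Q^✂(Z)` lying over `v`, the image of `Γ Δ(e_v)` is spanned by their classes.
-/

theorem t_eq_h_and_notMem_of_excision {Q : Quiv} {Z : Set (Q.A × Q.A)}
    (lg : LocallyGentle Q Z) (s : RelSelection Q Z) {x y : Q.A}
    (h : (excision Q Z s).t x = (excision Q Z s).h y) :
    Q.t x = Q.h y ∧ (x, y) ∉ Z := by
  simp only [excision] at h
  by_cases hx : Relational Q Z (Q.t x) <;> by_cases hy : Relational Q Z (Q.h y)
  · rw [dif_pos hx, dif_pos hy, Sum.inr.injEq, Prod.mk.injEq, Subtype.mk.injEq] at h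
    obtain ⟨hth, hflag⟩ := h
    refine ⟨hth, fun hxy => ?_⟩
    obtain ⟨hba, -, -⟩ := s.spec (Q.t x) hx
    rw [← hth] at hflag
    by_cases h1 : (x, s.a (Q.t x)) ∈ Z
    · have hy' : y = s.a (Q.t x) := lg.rel_right x y _ hxy h1
      rw [if_pos h1, if_pos (by rwa [hy'])] at hflag
      exact Bool.noConfusion hflag
    · by_cases h2 : (s.b (Q.t x), y) ∈ Z
      · have hx' : x = s.b (Q.t x) := lg.rel_left y x _ hxy h2
        rw [← hx'] at hba
        exact h1 hba
      · rw [if_neg h1, if_neg h2] at hflag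
        exact Bool.noConfusion hflag
  · rw [dif_pos hx, dif_neg hy] at h; exact (Sum.inr_ne_inl h).elim
  · rw [dif_neg hx, dif_pos hy] at h; exact (Sum.inl_ne_inr h).elim
  · rw [dif_neg hx, dif_neg hy, Sum.inl.injEq, Subtype.mk.injEq] at h
    exact ⟨h, fun hxy => hx ⟨x, y, hxy, rfl, (lg.comp (x, y) hxy).symm⟩⟩

theorem isPath_of_isPath_excision {Q : Quiv} {Z : Set (Q.A × Q.A)} (lg : LocallyGentle Q Z)
    (s : RelSelection Q Z) {p : List Q.A} (hp : (excision Q Z s).IsPath p) :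
    Q.IsPath p ∧ p.IsChain (fun x y => (x, y) ∉ Z) :=
  ⟨hp.imp fun _ _ h => (t_eq_h_and_notMem_of_excision lg s h).1,
    hp.imp fun _ _ h => (t_eq_h_and_notMem_of_excision lg s h).2⟩

namespace SLPA

variable {K : Type} [DivisionRing K] {Q : Quiv} [Fintype Q.V] {σ : Q.A → K ≃+* K}
  {Γ : Type} [Ring Γ] (P : SLPA K Q σ Γ)

def path (l : List Q.A) : Γ := (l.map P.ar).prod

@[simp]
theorem path_nil : P.path [] = 1 := rfl

@[simp]
theorem path_cons (x : Q.A) (l : List Q.A) : P.path (x :: l) = P.ar x * P.path l := by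
  simp [path]

theorem path_append (l m : List Q.A) : P.path (l ++ m) = P.path l * P.path m := by
  simp [path]

theorem e_mul_e (u w : Q.V) : P.e u * P.e w = if u = w then P.e u else 0 := by
  split_ifs with h
  · rw [h, P.e_idem]
  · exact P.e_orth u w h

theorem e_mul_ar (u : Q.V) (x : Q.A) : P.e u * P.ar x = if u = Q.h x then P.ar x else 0 := by
  conv_lhs => rw [← P.he_ar x, ← mul_assoc, e_mul_e]
  split_ifs with h <;> simp [h, P.he_ar]

theorem ar_mul_e (x : Q.A) (u : Q.V) : P.ar x * P.e u = if Q.t x = u then P.ar x else 0 := by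
  conv_lhs => rw [← P.ar_te x, mul_assoc, e_mul_e]
  split_ifs <;> simp [P.ar_te]

theorem ar_mul_ar_of_ne {x y : Q.A} (h : Q.t x ≠ Q.h y) : P.ar x * P.ar y = 0 := by
  rw [← P.he_ar y, ← mul_assoc, ar_mul_e, if_neg h, zero_mul]

theorem path_eq_zero_of_not_isPath : ∀ {l : List Q.A}, ¬ Q.IsPath l → P.path l = 0
  | [], h => absurd List.isChain_nil h
  | [x], h => absurd (List.isChain_singleton x) h
  | x :: y :: l, h => by
    by_cases hxy : Q.t x = Q.h y
    · rw [path_cons,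
        path_eq_zero_of_not_isPath fun hp => h (List.isChain_cons_cons.mpr ⟨hxy, hp⟩), mul_zero]
    · rw [path_cons, path_cons, ← mul_assoc, P.ar_mul_ar_of_ne hxy, zero_mul]

theorem exists_path_eq_zero_of_length_gt (hfin : {p : List Q.A | Q.IsPath p}.Finite) :
    ∃ N : ℕ, ∀ l : List Q.A, N < l.length → P.path l = 0 := by
  obtain ⟨N, hN⟩ := (hfin.image List.length).bddAbove
  exact ⟨N, fun l hl => P.path_eq_zero_of_not_isPath fun hp =>
    (hN (Set.mem_image_of_mem _ hp)).not_gt hl⟩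

theorem e_mul_path_cons (u : Q.V) (x : Q.A) (l : List Q.A) :
    P.e u * P.path (x :: l) = if u = Q.h x then P.path (x :: l) else 0 := by
  rw [path_cons, ← mul_assoc, e_mul_ar]
  split_ifs <;> simp

theorem path_mul_e_eq_self_or_eq_zero (u : Q.V) :
    ∀ {l : List Q.A}, l ≠ [] → P.path l * P.e u = P.path l ∨ P.path l * P.e u = 0
  | [], h => absurd rfl h
  | [x], _ => by
    rw [path_cons, path_nil, mul_one, ar_mul_e]
    split_ifs <;> simp
  | x :: y :: l, _ => by
    rw [path_cons, mul_assoc]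
    rcases path_mul_e_eq_self_or_eq_zero u (List.cons_ne_nil y l) with h | h
    · exact .inl (by rw [h])
    · exact .inr (by rw [h, mul_zero])

theorem e_mul_sum_e (u : Q.V) (S : Finset Q.V) :
    P.e u * ∑ w ∈ S, P.e w = if u ∈ S then P.e u else 0 := by
  simp only [Finset.mul_sum, e_mul_e, Finset.sum_ite_eq]

theorem exists_path_mul_ι (l : List Q.A) (c : K) :
    ∃ μ : K, P.path l * P.ι c = P.ι μ * P.path l := by
  induction l generalizing c with
  | nil => exact ⟨c, by simp⟩
  | cons x l ih =>
    obtain ⟨μ, hμ⟩ := ih c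
    exact ⟨σ x μ, by rw [path_cons, mul_assoc, hμ, ← mul_assoc, P.semilinear, mul_assoc]⟩

variable [Module K Γ]

def arrowPow (k : ℕ) : Submodule K Γ :=
  Submodule.span K {x : Γ | ∃ l : List Q.A, k ≤ l.length ∧ x = P.path l}

theorem path_mem_arrowPow {k : ℕ} {l : List Q.A} (hl : k ≤ l.length) :
    P.path l ∈ P.arrowPow k :=
  Submodule.subset_span ⟨l, hl, rfl⟩

theorem arrowPow_eq_bot {N : ℕ} (hN : ∀ l : List Q.A, N < l.length → P.path l = 0) :
    P.arrowPow (N + 1) = ⊥ := by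
  rw [arrowPow, eq_bot_iff, Submodule.span_le]
  rintro _ ⟨l, hl, rfl⟩
  rw [hN l hl]
  exact zero_mem _

section PathBasis

variable (hs : ∀ (c : K) (x : Γ), c • x = P.ι c * x)
include hs

protected theorem smul_mul_assoc (c : K) (a b : Γ) : (c • a) * b = c • (a * b) := by
  rw [hs, hs, mul_assoc]

theorem e_mul_smul (u : Q.V) (c : K) (a : Γ) : P.e u * (c • a) = c • (P.e u * a) := by
  rw [hs, hs, ← mul_assoc, P.e_comm, mul_assoc]

noncomputable def pathBasis :
    Module.Basis (Q.V ⊕ {p : List Q.A // p ≠ [] ∧ Q.IsPath p}) K Γ :=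
  have hbij : Function.Bijective (Finsupp.linearCombination K
      (Sum.elim P.e fun q : {p : List Q.A // p ≠ [] ∧ Q.IsPath p} => P.path q.1)) := by
    convert P.free using 1
    funext c
    exact Finsupp.sum_congr fun i _ => hs _ _
  .mk (linearIndependent_iff_injective_finsuppLinearCombination.mpr hbij.injective)
    (by rw [← Finsupp.range_linearCombination, LinearMap.range_eq_top.mpr hbij.surjective])

@[simp]
theorem pathBasis_inl (u : Q.V) : P.pathBasis hs (.inl u) = P.e u := by
  simp [pathBasis]

@[simp]
theorem pathBasis_inr (q : {p : List Q.A // p ≠ [] ∧ Q.IsPath p}) :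
    P.pathBasis hs (.inr q) = P.path q.1 := by
  simp [pathBasis]

noncomputable def vertexCoord (u : Q.V) : Γ →ₗ[K] K := (P.pathBasis hs).coord (.inl u)

theorem vertexCoord_e (u w : Q.V) : P.vertexCoord hs u (P.e w) = if w = u then 1 else 0 := by
  rw [vertexCoord, ← pathBasis_inl P hs, Module.Basis.coord_apply, Module.Basis.repr_self,
    Finsupp.single_apply]
  simp

theorem vertexCoord_path (u : Q.V) {l : List Q.A} (hl : l ≠ []) :
    P.vertexCoord hs u (P.path l) = 0 := by
  by_cases hp : Q.IsPath l
  · rw [vertexCoord, ← pathBasis_inr P hs ⟨l, hl, hp⟩, Module.Basis.coord_apply,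
      Module.Basis.repr_self, Finsupp.single_apply, if_neg Sum.inr_ne_inl]
  · rw [P.path_eq_zero_of_not_isPath hp, map_zero]

theorem arrowPow_one_le_ker_vertexCoord (u : Q.V) :
    P.arrowPow 1 ≤ LinearMap.ker (P.vertexCoord hs u) := by
  rw [arrowPow, Submodule.span_le]
  rintro _ ⟨l, hl, rfl⟩
  exact P.vertexCoord_path hs u (List.ne_nil_of_length_pos hl)

theorem sub_sum_vertexCoord_smul_e_mem (z : Γ) :
    z - ∑ u, P.vertexCoord hs u z • P.e u ∈ P.arrowPow 1 := by
  let ψ : Γ →ₗ[K] Γ := LinearMap.id -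
    ∑ u, (LinearMap.toSpanSingleton K Γ (P.e u)).comp (P.vertexCoord hs u)
  have hψ : ∀ z, ψ z = z - ∑ u, P.vertexCoord hs u z • P.e u := fun z => by simp [ψ]
  have hle : Submodule.span K (Set.range (P.pathBasis hs)) ≤ (P.arrowPow 1).comap ψ := by
    rw [Submodule.span_le]
    rintro _ ⟨i | q, rfl⟩ <;> simp only [SetLike.mem_coe, Submodule.mem_comap, hψ]
    · simp [vertexCoord_e, ite_smul]
    · simpa [P.vertexCoord_path hs _ q.2.1] using
        P.path_mem_arrowPow (List.length_pos_iff.mpr q.2.1)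
  simpa only [Submodule.mem_comap, hψ] using hle ((P.pathBasis hs).mem_span z)

theorem mul_mem_arrowPow_add {k m : ℕ} {a b : Γ} (ha : a ∈ P.arrowPow k)
    (hb : b ∈ P.arrowPow m) :
    a * b ∈ P.arrowPow (k + m) := by
  induction ha using Submodule.span_induction with
  | mem a ha =>
    obtain ⟨l, hl, rfl⟩ := ha
    induction hb using Submodule.span_induction with
    | mem b hb =>
      obtain ⟨l', hl', rfl⟩ := hb
      rw [← path_append]
      exact P.path_mem_arrowPow (by rw [List.length_append]; omega)
    | zero => simp
    | add _ _ _ _ h₁ h₂ => rw [mul_add]; exact add_mem h₁ h₂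
    | smul c b _ hb =>
      obtain ⟨μ, hμ⟩ := P.exists_path_mul_ι l c
      rw [hs, ← mul_assoc, hμ, mul_assoc, ← hs]
      exact Submodule.smul_mem _ _ hb
  | zero => simp
  | add _ _ _ _ h₁ h₂ => rw [add_mul]; exact add_mem h₁ h₂
  | smul c a _ ha => rw [P.smul_mul_assoc hs]; exact Submodule.smul_mem _ _ ha

theorem pow_mem_arrowPow {x : Γ} (hx : x ∈ P.arrowPow 1) (n : ℕ) : x ^ n ∈ P.arrowPow n := by
  induction n with
  | zero => simpa using P.path_mem_arrowPow (l := []) le_rfl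
  | succ n ih => rw [pow_succ]; exact P.mul_mem_arrowPow_add hs ih hx

theorem mul_mem_arrowPow_one (y : Γ) {j : Γ} (hj : j ∈ P.arrowPow 1) :
    y * j ∈ P.arrowPow 1 := by
  induction hj using Submodule.span_induction generalizing y with
  | mem j hj =>
    obtain ⟨l, hl, rfl⟩ := hj
    obtain ⟨x, l, rfl⟩ := List.exists_cons_of_ne_nil (List.ne_nil_of_length_pos hl)
    induction (P.pathBasis hs).mem_span y using Submodule.span_induction with
    | mem _ hy =>
      obtain ⟨u | q, rfl⟩ := hy
      · rw [pathBasis_inl, e_mul_path_cons]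
        split_ifs
        exacts [P.path_mem_arrowPow hl, zero_mem _]
      · rw [pathBasis_inr, ← path_append]
        exact P.path_mem_arrowPow (by rw [List.length_append, List.length_cons]; omega)
    | zero => simp
    | add _ _ _ _ h₁ h₂ => rw [add_mul]; exact add_mem h₁ h₂
    | smul c _ _ hy => rw [P.smul_mul_assoc hs]; exact Submodule.smul_mem _ _ hy
  | zero => simp
  | add _ _ _ _ h₁ h₂ => rw [mul_add]; exact add_mem (h₁ y) (h₂ y)
  | smul c j _ hj => rw [hs, ← mul_assoc]; exact hj _

theorem arrowPow_one_mul_mem {j : Γ} (hj : j ∈ P.arrowPow 1) (y : Γ) :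
    j * y ∈ P.arrowPow 1 := by
  induction hj using Submodule.span_induction with
  | mem j hj =>
    obtain ⟨l, hl, rfl⟩ := hj
    induction (P.pathBasis hs).mem_span y using Submodule.span_induction with
    | mem _ hy =>
      obtain ⟨u | q, rfl⟩ := hy
      · rw [pathBasis_inl]
        rcases P.path_mul_e_eq_self_or_eq_zero u (List.ne_nil_of_length_pos hl) with h | h <;>
          rw [h]
        exacts [P.path_mem_arrowPow hl, zero_mem _]
      · rw [pathBasis_inr, ← path_append]
        exact P.path_mem_arrowPow (by rw [List.length_append]; omega)
    | zero => simp
    | add _ _ _ _ h₁ h₂ => rw [mul_add]; exact add_mem h₁ h₂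
    | smul c y _ hy =>
      obtain ⟨μ, hμ⟩ := P.exists_path_mul_ι l c
      rw [hs, ← mul_assoc, hμ, mul_assoc, ← hs]
      exact Submodule.smul_mem _ _ hy
  | zero => simp
  | add _ _ _ _ h₁ h₂ => rw [add_mul]; exact add_mem h₁ h₂
  | smul c j _ hj => rw [P.smul_mul_assoc hs]; exact Submodule.smul_mem _ _ hj

theorem arrowPow_one_subset_radSet {N : ℕ}
    (hN : ∀ l : List Q.A, N < l.length → P.path l = 0) :
    (P.arrowPow 1 : Set Γ) ⊆ radSet Γ := fun x hx y => by
  have hpow := P.pow_mem_arrowPow hs (P.mul_mem_arrowPow_one hs y hx) (N + 1)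
  rw [P.arrowPow_eq_bot hN, Submodule.mem_bot] at hpow
  exact IsNilpotent.isUnit_one_sub ⟨N + 1, hpow⟩

theorem vertexCoord_eq_zero_of_mem_radSet {x : Γ} (hx : x ∈ radSet Γ) (u : Q.V) :
    P.vertexCoord hs u x = 0 := by
  by_contra hc
  set c := P.vertexCoord hs u x
  -- Otherwise `e u = (e u * t) * t⁻¹` lies in the arrow ideal, where
  -- `t = 1 - (c⁻¹ • e u) * x` is the unit provided by `hx`.
  have hux : P.e u * x - c • P.e u ∈ P.arrowPow 1 := by
    simpa [mul_sub, Finset.mul_sum, P.e_mul_smul hs, e_mul_e, c] using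
      P.mul_mem_arrowPow_one hs (P.e u) (P.sub_sum_vertexCoord_smul_e_mem hs x)
  obtain ⟨t, ht⟩ := hx (c⁻¹ • P.e u)
  have he : P.e u * t ∈ P.arrowPow 1 := by
    have : P.e u * t = -(c⁻¹ • (P.e u * x - c • P.e u)) := by
      rw [ht, mul_sub, mul_one, ← mul_assoc, P.e_mul_smul hs, P.e_idem, P.smul_mul_assoc hs,
        smul_sub, smul_smul, inv_mul_cancel₀ hc, one_smul, neg_sub]
    rw [this]
    exact neg_mem (Submodule.smul_mem _ _ hux)
  have hcoord := P.arrowPow_one_le_ker_vertexCoord hs u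
    (by simpa using P.arrowPow_one_mul_mem hs he ↑t⁻¹)
  simp [vertexCoord_e] at hcoord

theorem radSet_subset_arrowPow_one : radSet Γ ⊆ (P.arrowPow 1 : Set Γ) := fun x hx => by
  simpa [P.vertexCoord_eq_zero_of_mem_radSet hs hx] using P.sub_sum_vertexCoord_smul_e_mem hs x

theorem span_radSet_eq_arrowPow_one {N : ℕ}
    (hN : ∀ l : List Q.A, N < l.length → P.path l = 0) :
    Submodule.span K (radSet Γ) = P.arrowPow 1 :=
  le_antisymm (Submodule.span_le.mpr (P.radSet_subset_arrowPow_one hs))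
    (by simpa using Submodule.span_mono (R := K) (P.arrowPow_one_subset_radSet hs hN))

theorem linearIndependent_mkQ_e : LinearIndependent K fun u => (P.arrowPow 1).mkQ (P.e u) := by
  let f : Q.V → Module.Dual K (Γ ⧸ P.arrowPow 1) := fun u =>
    (P.arrowPow 1).liftQ (P.vertexCoord hs u) (P.arrowPow_one_le_ker_vertexCoord hs u)
  refine .of_pairwise_dual_eq_zero_one _ f (fun u w huw => ?_) fun u => ?_
  · simp [f, vertexCoord_e, Ne.symm huw]
  · simp [f, vertexCoord_e]

theorem map_mkQ_span_mul_sum_e (S : Finset Q.V) :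
    (Submodule.span K {y : Γ | ∃ x : Γ, y = x * ∑ w ∈ S, P.e w}).map (P.arrowPow 1).mkQ =
      Submodule.span K (Set.range fun w : S => (P.arrowPow 1).mkQ (P.e w)) := by
  apply le_antisymm
  · rw [Submodule.map_span, Submodule.span_le]
    rintro _ ⟨_, ⟨x, rfl⟩, rfl⟩
    have hx : x * ∑ w ∈ S, P.e w - ∑ w ∈ S, P.vertexCoord hs w x • P.e w ∈
        P.arrowPow 1 := by
      simpa [sub_mul, Finset.sum_mul, P.smul_mul_assoc hs, e_mul_sum_e, smul_ite] using
        P.arrowPow_one_mul_mem hs (P.sub_sum_vertexCoord_smul_e_mem hs x) (∑ w ∈ S, P.e w)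
    rw [SetLike.mem_coe, Submodule.mkQ_apply, (Submodule.Quotient.eq _).mpr hx,
      ← Submodule.mkQ_apply, map_sum]
    refine Submodule.sum_mem _ fun w hw => ?_
    rw [map_smul]
    exact Submodule.smul_mem _ _ (Submodule.subset_span ⟨⟨w, hw⟩, rfl⟩)
  · rw [Submodule.span_le]
    rintro _ ⟨⟨w, hw⟩, rfl⟩
    exact Submodule.mem_map_of_mem
      (Submodule.subset_span (show P.e w ∈ {y : Γ | ∃ x : Γ, y = x * ∑ w ∈ S, P.e w} from
        ⟨P.e w, by rw [e_mul_sum_e, if_pos hw]⟩))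

theorem finrank_map_mkQ_span_mul_sum_e (S : Finset Q.V) :
    Module.finrank K ((Submodule.span K {y : Γ | ∃ x : Γ, y = x * ∑ w ∈ S, P.e w}).map
      (P.arrowPow 1).mkQ) = S.card := by
  rw [P.map_mkQ_span_mul_sum_e hs, ← Fintype.card_coe S]
  exact finrank_span_eq_card ((P.linearIndependent_mkQ_e hs).comp _ Subtype.val_injective)

end PathBasis

end SLPA

theorem stmt11_general (K : Type) [DivisionRing K] (Q : Quiv) [Fintype Q.V]
    (Z : Set (Q.A × Q.A)) (lg : LocallyGentle Q Z)
    (hgentle : {p : List Q.A | Q.IsPath p ∧ p.Chain' (fun x y => (x, y) ∉ Z)}.Finite)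
    (σ : Q.A → K ≃+* K) (s : RelSelection Q Z)
    (Λ Γ : Type) [Ring Λ] [Ring Γ]
    (SΛ : GentlePres K Q σ Z Λ)
    [Fintype (excision Q Z s).V]
    (SΓ : SLPA K (excision Q Z s) σ Γ)
    [Module K Γ] (hsmul : ∀ (lam : K) (x : Γ), lam • x = SΓ.ι lam * x)
    (Δ : Λ →+* Γ)
    (hΔe : ∀ v : Q.V, Δ (SΛ.e v) =
      if h : Relational Q Z v then
        SΓ.e (Sum.inr (⟨v, h⟩, true)) + SΓ.e (Sum.inr (⟨v, h⟩, false))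
      else SΓ.e (Sum.inl ⟨v, h⟩))
    (v : Q.V) :
    Module.finrank K
      ((Submodule.span K {y : Γ | ∃ x : Γ, y = x * Δ (SΛ.e v)}).map
        (Submodule.span K (radSet Γ)).mkQ) =
      (if Relational Q Z v then 2 else 1) := by
  obtain ⟨N, hN⟩ := SΓ.exists_path_eq_zero_of_length_gt
    (hgentle.subset fun _ hp => isPath_of_isPath_excision lg s hp)
  obtain ⟨S, hS, hcard⟩ : ∃ S : Finset (excision Q Z s).V,
      Δ (SΛ.e v) = ∑ w ∈ S, SΓ.e w ∧ S.card = if Relational Q Z v then 2 else 1 := by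
    by_cases hv : Relational Q Z v
    · let w : Bool → (excision Q Z s).V := fun b => .inr (⟨v, hv⟩, b)
      have hne : w true ≠ w false := fun h =>
        Bool.noConfusion (congrArg Prod.snd (Sum.inr_injective h))
      refine ⟨{w true, w false}, ?_, (Finset.card_pair hne).trans (if_pos hv).symm⟩
      rw [Finset.sum_pair hne, hΔe, dif_pos hv]
    · let w : (excision Q Z s).V := .inl ⟨v, hv⟩
      refine ⟨{w}, ?_, (Finset.card_singleton w).trans (if_neg hv).symm⟩
      rw [Finset.sum_singleton, hΔe, dif_neg hv]
  rw [SΓ.span_radSet_eq_arrowPow_one hsmul hN, hS, SΓ.finrank_map_mkQ_span_mul_sum_e hsmul, hcard]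

/-- For the embedding `Δ : Λ = K_σ Q/⟨Z⟩ → Γ = K_{σ'} Q^✂(Z)` and a vertex `v` of `Q`
with simple module `U = Λe_v/Ae_v`, the `K`-dimension of
`(Γ/rad Γ) ⊗_{Λ/rad Λ} U ≅ (Γ/rad Γ)·Δ(e_v)` is `1` if `v` is non-relational and `2`
if `v` is relational; in particular `Γ ⊗_Λ U` has length at most 2. -/
theorem stmt11 (K : Type) [DivisionRing K] (Q : Quiv) [Fintype Q.V] [Finite Q.A]
    (Z : Set (Q.A × Q.A)) (lg : LocallyGentle Q Z)
    (hgentle : {p : List Q.A | Q.IsPath p ∧ p.Chain' (fun x y => (x, y) ∉ Z)}.Finite)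
    (σ : Q.A → K ≃+* K) (s : RelSelection Q Z)
    (Λ Γ : Type) [Ring Λ] [Ring Γ]
    (SΛ : GentlePres K Q σ Z Λ)
    [Fintype (excision Q Z s).V]
    (SΓ : SLPA K (excision Q Z s) σ Γ)
    [Module K Γ] (hsmul : ∀ (lam : K) (x : Γ), lam • x = SΓ.ι lam * x)
    (Δ : Λ →+* Γ) (hΔinj : Function.Injective Δ)
    (hΔι : ∀ lam : K, Δ (SΛ.ι lam) = SΓ.ι lam)
    (hΔar : ∀ x : Q.A, Δ (SΛ.ar x) = SΓ.ar x)
    (hΔe : ∀ v : Q.V, Δ (SΛ.e v) =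
      if h : Relational Q Z v then
        SΓ.e (Sum.inr (⟨v, h⟩, true)) + SΓ.e (Sum.inr (⟨v, h⟩, false))
      else SΓ.e (Sum.inl ⟨v, h⟩))
    (v : Q.V) :
    Module.finrank K
      ((Submodule.span K {y : Γ | ∃ x : Γ, y = x * Δ (SΛ.e v)}).map
        (Submodule.span K (radSet Γ)).mkQ) =
      (if Relational Q Z v then 2 else 1) :=
  stmt11_general K Q Z lg hgentle σ s Λ Γ SΛ SΓ hsmul Δ hΔe v
end

section
/- Let K be a division ring, Q a finite quiver, and sigma : Q_1 -> Aut(K). Define R = K^{Q_0} and let M = K^{Q_1} be the R-R-bimodule with left action (lambda_v)(mu_a) = (lambda_{h(a)} mu_a) and right action (mu_a)(eta_v) = (mu_a sigma_a(eta_{t(a)})). Then the semilinear path algebra K_sigma Q is isomorphic as a K-ring to the tensor ring T_R(M) = ⊕_{n≥0} M^{⊗_R n}, via the map sending a path a_1...a_n to the corresponding pure tensor of indicator elements. -/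
attribute [local instance] Classical.propDecidable

/-- A presentation of the tensor ring `T_R(M)` where `R = K^{Q₀}` (the product ring) and
`M = K^{Q₁}` is the `R`-`R`-bimodule with left action `(λ_v)(μ_a) = (λ_{h(a)} μ_a)` and
right action twisted by σ: `(μ_a)(η_v) = (μ_a σ_a(η_{t(a)}))`.  The presentation records
the structure maps `ρ : R → T`, `μ : M → T` satisfying the bimodule compatibilities, and
the universal property of the tensor ring. -/
structure TensorRingOver (K : Type) [DivisionRing K] (Q : Quiv)
    (σ : Q.A → K ≃+* K) (T : Type) [Ring T] where
  ρ : (Q.V → K) →+* T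
  μ : (Q.A → K) →+ T
  left_compat : ∀ (r : Q.V → K) (m : Q.A → K),
    μ (fun x => r (Q.h x) * m x) = ρ r * μ m
  right_compat : ∀ (m : Q.A → K) (r : Q.V → K),
    μ (fun x => m x * σ x (r (Q.t x))) = μ m * ρ r
  universal : ∀ (C : Type) [Ring C], ∀ (ρ' : (Q.V → K) →+* C) (μ' : (Q.A → K) →+ C),
    (∀ (r : Q.V → K) (m : Q.A → K), μ' (fun x => r (Q.h x) * m x) = ρ' r * μ' m) →
    (∀ (m : Q.A → K) (r : Q.V → K), μ' (fun x => m x * σ x (r (Q.t x))) = μ' m * ρ' r) →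
    ∃! f : T →+* C, (∀ r, f (ρ r) = ρ' r) ∧ (∀ m, f (μ m) = μ' m)

/-! The universal property of `T` yields a ring map `ψ : T → Λ` sending `ρ` and `μ` to the
corresponding combinations of trivial paths and arrows. Both rings contain elements `ι λ`,
`e v`, `a` satisfying the defining relations of `K_σ Q`, and `ψ` carries each `K`-linear
combination of paths in `T` to the same combination in `Λ`. Since paths form a left `K`-basis
of `Λ`, it remains to see that they span `T`. Their span contains `1` and is stable under
left multiplication by the generators (an arrow times a path is a path or zero), hence by
the subring they generate, which is all of `T` by the uniqueness part of the
universal property. -/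

namespace Quiv

abbrev NontrivialPath (Q : Quiv) := {p : List Q.A // p ≠ [] ∧ Q.IsPath p}

abbrev Path (Q : Quiv) := Q.V ⊕ Q.NontrivialPath

end Quiv

def AddSubgroup.leftMulStabilizer {A : Type*} [Ring A] (M : AddSubgroup A) : Subring A where
  carrier := {a | ∀ m ∈ M, a * m ∈ M}
  mul_mem' ha hb m hm := by rw [mul_assoc]; exact ha _ (hb m hm)
  one_mem' m hm := by rwa [one_mul]
  add_mem' ha hb m hm := by rw [add_mul]; exact M.add_mem (ha m hm) (hb m hm)
  zero_mem' m _ := by rw [zero_mul]; exact M.zero_mem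
  neg_mem' ha m hm := by rw [neg_mul]; exact M.neg_mem (ha m hm)

namespace TensorRingOver

variable {K : Type} [DivisionRing K] {Q : Quiv} {σ : Q.A → K ≃+* K} {T : Type} [Ring T]
  (Tr : TensorRingOver K Q σ T)

theorem ringHom_ext {C : Type} [Ring C] {f g : T →+* C}
    (hρ : ∀ r, f (Tr.ρ r) = g (Tr.ρ r)) (hμ : ∀ m, f (Tr.μ m) = g (Tr.μ m)) : f = g := by
  obtain ⟨_, -, huniq⟩ := Tr.universal C (f.comp Tr.ρ) (f.toAddMonoidHom.comp Tr.μ)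
    (fun r m => by simp [Tr.left_compat]) (fun m r => by simp [Tr.right_compat])
  exact (huniq f ⟨fun _ => rfl, fun _ => rfl⟩).trans
    (huniq g ⟨fun r => (hρ r).symm, fun m => (hμ m).symm⟩).symm

theorem subring_eq_top (S : Subring T) (hρ : ∀ r, Tr.ρ r ∈ S) (hμ : ∀ m, Tr.μ m ∈ S) :
    S = ⊤ := by
  obtain ⟨f, ⟨hfρ, hfμ⟩, -⟩ := Tr.universal S (Tr.ρ.codRestrict S hρ) (Tr.μ.codRestrict S hμ)
    (fun r m => Subtype.ext (Tr.left_compat r m)) (fun m r => Subtype.ext (Tr.right_compat m r))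
  have hf : S.subtype.comp f = RingHom.id T :=
    Tr.ringHom_ext (fun r => congrArg Subtype.val (hfρ r)) (fun m => congrArg Subtype.val (hfμ m))
  refine eq_top_iff.mpr fun t _ => ?_
  rw [← RingHom.id_apply t, ← hf]
  exact (f t).2

end TensorRingOver

/-- The defining relations of `K_σ Q`, without the freeness of the paths. -/
structure SemilinearSystem {K : Type} [DivisionRing K] {Q : Quiv} [Fintype Q.V]
    (σ : Q.A → K ≃+* K) (A : Type) [Ring A] where
  ι : K →+* A
  e : Q.V → A
  ar : Q.A → A
  sum_e : ∑ v, e v = 1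
  e_mul_e : ∀ u v, e u * e v = if u = v then e u else 0
  e_mul_ar : ∀ u x, e u * ar x = if u = Q.h x then ar x else 0
  ar_mul_e : ∀ x v, ar x * e v = if v = Q.t x then ar x else 0
  ar_mul_ι : ∀ x lam, ar x * ι lam = ι (σ x lam) * ar x
  e_mul_ι : ∀ v lam, e v * ι lam = ι lam * e v

namespace SemilinearSystem

variable {K : Type} [DivisionRing K] {Q : Quiv} [Fintype Q.V] {σ : Q.A → K ≃+* K}
  {A : Type} [Ring A] (s : SemilinearSystem σ A)

def path : Q.Path → A :=
  Sum.elim s.e fun q => (q.1.map s.ar).prod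

def linearCombination : (Q.Path →₀ K) →+ A where
  toFun c := c.sum fun b lam => s.ι lam * s.path b
  map_zero' := Finsupp.sum_zero_index
  map_add' _ _ := Finsupp.sum_add_index' (by simp) fun _ _ _ => by rw [map_add, add_mul]

theorem linearCombination_apply (c : Q.Path →₀ K) :
    s.linearCombination c = c.sum fun b lam => s.ι lam * s.path b :=
  rfl

theorem ι_mul_path_mem_range (b : Q.Path) (lam : K) :
    s.ι lam * s.path b ∈ s.linearCombination.range :=
  ⟨Finsupp.single b lam, by rw [linearCombination_apply, Finsupp.sum_single_index (by simp)]⟩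

theorem one_mem_range : 1 ∈ s.linearCombination.range := by
  rw [← s.sum_e]
  refine sum_mem fun v _ => ?_
  simpa [path] using s.ι_mul_path_mem_range (.inl v) 1

theorem e_mul_prod {p : List Q.A} (hp : p ≠ []) (u : Q.V) :
    s.e u * (p.map s.ar).prod = if u = Q.h (p.head hp) then (p.map s.ar).prod else 0 := by
  obtain ⟨x, p, rfl⟩ := List.exists_cons_of_ne_nil hp
  rw [List.map_cons, List.prod_cons, ← mul_assoc, s.e_mul_ar, List.head_cons]
  split_ifs <;> simp

theorem e_mul_path (u : Q.V) (b : Q.Path) :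
    s.e u * s.path b = 0 ∨ s.e u * s.path b = s.path b := by
  rcases b with v | ⟨p, hp, -⟩
  · change s.e u * s.e v = 0 ∨ s.e u * s.e v = s.e v
    rw [s.e_mul_e]
    split_ifs with h
    exacts [.inr (h ▸ rfl), .inl rfl]
  · change s.e u * (p.map s.ar).prod = 0 ∨ s.e u * (p.map s.ar).prod = (p.map s.ar).prod
    rw [s.e_mul_prod hp]
    split_ifs
    exacts [.inr rfl, .inl rfl]

theorem ar_mul_path (x : Q.A) (b : Q.Path) :
    s.ar x * s.path b = 0 ∨ ∃ b', s.ar x * s.path b = s.path b' := by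
  rcases b with v | ⟨p, hp, hpath⟩
  · change s.ar x * s.e v = 0 ∨ ∃ b', s.ar x * s.e v = s.path b'
    rw [s.ar_mul_e]
    split_ifs
    exacts [.inr ⟨.inr ⟨[x], List.cons_ne_nil _ _, List.isChain_singleton x⟩, by simp [path]⟩,
      .inl rfl]
  · obtain ⟨y, l, rfl⟩ := List.exists_cons_of_ne_nil hp
    have h_prod := congrArg (s.ar x * ·) (s.e_mul_prod hp (Q.t x))
    simp only [← mul_assoc, s.ar_mul_e, if_true] at h_prod
    change s.ar x * ((y :: l).map s.ar).prod = 0 ∨ ∃ b', s.ar x * ((y :: l).map s.ar).prod = _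
    rw [h_prod]
    split_ifs with h
    · exact .inr ⟨.inr ⟨x :: y :: l, List.cons_ne_nil _ _, List.isChain_cons_cons.mpr ⟨h, hpath⟩⟩,
        by simp [path]⟩
    · exact .inl (mul_zero _)

theorem mem_leftMulStabilizer {g : A}
    (hg : ∀ b lam, g * (s.ι lam * s.path b) ∈ s.linearCombination.range) :
    g ∈ s.linearCombination.range.leftMulStabilizer := by
  rintro _ ⟨c, rfl⟩
  rw [linearCombination_apply, Finsupp.mul_sum]
  exact AddSubmonoidClass.finsuppSum_mem _ _ _ fun b _ => hg b (c b)

theorem ι_mem_leftMulStabilizer (lam : K) :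
    s.ι lam ∈ s.linearCombination.range.leftMulStabilizer :=
  s.mem_leftMulStabilizer fun b mu => by
    simpa only [map_mul, mul_assoc] using s.ι_mul_path_mem_range b (lam * mu)

theorem e_mem_leftMulStabilizer (u : Q.V) :
    s.e u ∈ s.linearCombination.range.leftMulStabilizer :=
  s.mem_leftMulStabilizer fun b mu => by
    rw [← mul_assoc, s.e_mul_ι, mul_assoc]
    rcases s.e_mul_path u b with h | h <;> rw [h]
    exacts [by simp, s.ι_mul_path_mem_range b mu]

theorem ar_mem_leftMulStabilizer (x : Q.A) :
    s.ar x ∈ s.linearCombination.range.leftMulStabilizer :=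
  s.mem_leftMulStabilizer fun b mu => by
    rw [← mul_assoc, s.ar_mul_ι, mul_assoc]
    rcases s.ar_mul_path x b with h | ⟨b', h⟩ <;> rw [h]
    exacts [by simp, s.ι_mul_path_mem_range b' _]

theorem linearCombination_surjective
    (h : s.linearCombination.range.leftMulStabilizer = ⊤) :
    Function.Surjective s.linearCombination := fun t => by
  simpa using (h ▸ Subring.mem_top t : t ∈ s.linearCombination.range.leftMulStabilizer) _
    s.one_mem_range

theorem map_linearCombination {B : Type} [Ring B] (s' : SemilinearSystem σ B) (f : A →+* B)
    (hι : ∀ lam, f (s.ι lam) = s'.ι lam) (he : ∀ v, f (s.e v) = s'.e v)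
    (har : ∀ x, f (s.ar x) = s'.ar x) (c : Q.Path →₀ K) :
    f (s.linearCombination c) = s'.linearCombination c := by
  have hpath : ∀ b, f (s.path b) = s'.path b := by
    rintro (v | q)
    · exact he v
    · simp only [path, Sum.elim_inr, map_list_prod, List.map_map]
      exact congrArg _ (List.map_congr_left fun x _ => har x)
  simp only [linearCombination_apply, map_finsuppSum, map_mul, hι, hpath]

theorem ι_mul_e_mul_ι_mul_e (a b : K) (u v : Q.V) :
    s.ι a * s.e u * (s.ι b * s.e v) = if u = v then s.ι (a * b) * s.e u else 0 := by
  rw [mul_assoc, ← mul_assoc (s.e u), s.e_mul_ι, mul_assoc, s.e_mul_e, ← mul_assoc, ← map_mul]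
  split_ifs <;> simp

theorem ι_mul_e_mul_ι_mul_ar (a b : K) (u : Q.V) (x : Q.A) :
    s.ι a * s.e u * (s.ι b * s.ar x) = if u = Q.h x then s.ι (a * b) * s.ar x else 0 := by
  rw [mul_assoc, ← mul_assoc (s.e u), s.e_mul_ι, mul_assoc, s.e_mul_ar, ← mul_assoc, ← map_mul]
  split_ifs <;> simp

theorem ι_mul_ar_mul_ι_mul_e (a b : K) (x : Q.A) (v : Q.V) :
    s.ι a * s.ar x * (s.ι b * s.e v) = if v = Q.t x then s.ι (a * σ x b) * s.ar x else 0 := by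
  rw [mul_assoc, ← mul_assoc (s.ar x), s.ar_mul_ι, mul_assoc, s.ar_mul_e, ← mul_assoc, ← map_mul]
  split_ifs <;> simp

def vertexHom : (Q.V → K) →+* A where
  toFun r := ∑ v, s.ι (r v) * s.e v
  map_one' := by simp [s.sum_e]
  map_zero' := by simp
  map_add' r r' := by simp [add_mul, Finset.sum_add_distrib]
  map_mul' r r' := by simp [Finset.sum_mul_sum, ι_mul_e_mul_ι_mul_e]

theorem vertexHom_apply (r : Q.V → K) : s.vertexHom r = ∑ v, s.ι (r v) * s.e v :=
  rfl

theorem vertexHom_const (lam : K) : s.vertexHom (fun _ => lam) = s.ι lam := by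
  rw [vertexHom_apply, ← Finset.mul_sum, s.sum_e, mul_one]

theorem vertexHom_indicator (v : Q.V) : s.vertexHom (fun u => if u = v then 1 else 0) = s.e v := by
  simp [vertexHom_apply, apply_ite s.ι]

theorem vertexHom_mem (S : Subring A) (hι : ∀ lam, s.ι lam ∈ S) (he : ∀ v, s.e v ∈ S)
    (r : Q.V → K) : s.vertexHom r ∈ S :=
  sum_mem fun v _ => mul_mem (hι _) (he v)

variable [Fintype Q.A]

def arrowHom : (Q.A → K) →+ A where
  toFun m := ∑ x, s.ι (m x) * s.ar x
  map_zero' := by simp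
  map_add' m m' := by simp [add_mul, Finset.sum_add_distrib]

theorem arrowHom_apply (m : Q.A → K) : s.arrowHom m = ∑ x, s.ι (m x) * s.ar x :=
  rfl

theorem arrowHom_indicator (x : Q.A) : s.arrowHom (fun y => if y = x then 1 else 0) = s.ar x := by
  simp [arrowHom_apply, apply_ite s.ι]

theorem arrowHom_mem (S : Subring A) (hι : ∀ lam, s.ι lam ∈ S) (har : ∀ x, s.ar x ∈ S)
    (m : Q.A → K) : s.arrowHom m ∈ S :=
  sum_mem fun x _ => mul_mem (hι _) (har x)

theorem arrowHom_left (r : Q.V → K) (m : Q.A → K) :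
    s.arrowHom (fun x => r (Q.h x) * m x) = s.vertexHom r * s.arrowHom m := by
  rw [arrowHom_apply, vertexHom_apply, arrowHom_apply, Finset.sum_mul_sum, Finset.sum_comm]
  simp [ι_mul_e_mul_ι_mul_ar]

theorem arrowHom_right (m : Q.A → K) (r : Q.V → K) :
    s.arrowHom (fun x => m x * σ x (r (Q.t x))) = s.arrowHom m * s.vertexHom r := by
  rw [arrowHom_apply, vertexHom_apply, arrowHom_apply, Finset.sum_mul_sum]
  simp [ι_mul_ar_mul_ι_mul_e]

end SemilinearSystem

def SLPA.toSystem {K : Type} [DivisionRing K] {Q : Quiv} [Fintype Q.V] {σ : Q.A → K ≃+* K}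
    {Λ : Type} [Ring Λ] (S : SLPA K Q σ Λ) : SemilinearSystem σ Λ where
  ι := S.ι
  e := S.e
  ar := S.ar
  sum_e := S.sum_e
  e_mul_e u v := by
    split_ifs with h
    · rw [h, S.e_idem]
    · exact S.e_orth u v h
  e_mul_ar u x := by
    split_ifs with h
    · rw [h, S.he_ar]
    · rw [← S.he_ar x, ← mul_assoc, S.e_orth u (Q.h x) h, zero_mul]
  ar_mul_e x v := by
    split_ifs with h
    · rw [h, S.ar_te]
    · rw [← S.ar_te x, mul_assoc, S.e_orth (Q.t x) v (Ne.symm h), mul_zero]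
  ar_mul_ι := S.semilinear
  e_mul_ι := S.e_comm

namespace TensorRingOver

variable {K : Type} [DivisionRing K] {Q : Quiv} [Fintype Q.V] {σ : Q.A → K ≃+* K}
  {T : Type} [Ring T] (Tr : TensorRingOver K Q σ T)

noncomputable def toSystem : SemilinearSystem σ T where
  ι := Tr.ρ.comp (Pi.constRingHom Q.V K)
  e v := Tr.ρ fun u => if u = v then 1 else 0
  ar x := Tr.μ fun y => if y = x then 1 else 0
  sum_e := by
    rw [← map_sum, ← map_one Tr.ρ]
    congr 1
    ext u
    simp [Finset.sum_apply]
  e_mul_e u v := by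
    rw [← map_mul, ← map_zero Tr.ρ, ← apply_ite Tr.ρ]
    congr 1
    ext w
    by_cases h : u = v <;> by_cases hw : w = u <;> simp_all
  e_mul_ar u x := by
    rw [← Tr.left_compat, ← map_zero Tr.μ, ← apply_ite Tr.μ]
    congr 1
    ext y
    by_cases h : u = Q.h x <;> by_cases hy : y = x <;> simp_all [eq_comm]
  ar_mul_e x v := by
    rw [← Tr.right_compat, ← map_zero Tr.μ, ← apply_ite Tr.μ]
    congr 1
    ext y
    by_cases h : v = Q.t x <;> by_cases hy : y = x <;> simp_all [eq_comm]
  ar_mul_ι x lam := by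
    change _ * Tr.ρ (fun _ => lam) = Tr.ρ (fun _ => σ x lam) * _
    rw [← Tr.right_compat, ← Tr.left_compat]
    congr 1
    ext y
    by_cases hy : y = x <;> simp [hy]
  e_mul_ι v lam := by
    change _ * Tr.ρ (fun _ => lam) = Tr.ρ (fun _ => lam) * _
    rw [← map_mul, ← map_mul]
    congr 1
    ext w
    by_cases hw : w = v <;> simp [hw]

theorem vertexHom_toSystem : Tr.toSystem.vertexHom = Tr.ρ := by
  ext r
  simp only [SemilinearSystem.vertexHom_apply, toSystem, RingHom.comp_apply, ← map_mul, ← map_sum]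
  congr 1
  ext u
  simp [Finset.sum_apply]

theorem arrowHom_toSystem [Fintype Q.A] : Tr.toSystem.arrowHom = Tr.μ := by
  refine AddMonoidHom.ext fun m => ?_
  simp only [SemilinearSystem.arrowHom_apply, toSystem, RingHom.comp_apply, Pi.constRingHom_apply,
    ← Tr.left_compat, ← map_sum]
  congr 1
  ext y
  simp [Finset.sum_apply]

theorem linearCombination_surjective [Finite Q.A] :
    Function.Surjective Tr.toSystem.linearCombination := by
  have := Fintype.ofFinite Q.A
  set s := Tr.toSystem
  refine s.linearCombination_surjective (Tr.subring_eq_top _ (fun r => ?_) (fun m => ?_))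
  · rw [← vertexHom_toSystem]
    exact s.vertexHom_mem _ s.ι_mem_leftMulStabilizer s.e_mem_leftMulStabilizer r
  · rw [← arrowHom_toSystem]
    exact s.arrowHom_mem _ s.ι_mem_leftMulStabilizer s.ar_mem_leftMulStabilizer m

end TensorRingOver

/-- The semilinear path algebra `K_σ Q` is isomorphic as a `K`-ring to the tensor ring
`T_R(M)` with `R = K^{Q₀}`, `M = K^{Q₁}` twisted by `σ`, via trivial paths `↦` indicator
idempotents, `K ↦` constant tuples, and paths `↦` pure tensors of indicator elements. -/
theorem stmt13 (K : Type) [DivisionRing K] (Q : Quiv) [Fintype Q.V] [Finite Q.A]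
    (σ : Q.A → K ≃+* K) (Λ : Type) [Ring Λ] (S : SLPA K Q σ Λ)
    (T : Type) [Ring T] (Tr : TensorRingOver K Q σ T) :
    ∃ φ : Λ ≃+* T,
      (∀ lam : K, φ (S.ι lam) = Tr.ρ (fun _ => lam)) ∧
      (∀ v : Q.V, φ (S.e v) = Tr.ρ (fun u => if u = v then 1 else 0)) ∧
      (∀ x : Q.A, φ (S.ar x) = Tr.μ (fun y => if y = x then 1 else 0)) ∧
      (∀ p : List Q.A, p ≠ [] → Q.IsPath p →
        φ ((p.map S.ar).prod) =
          (p.map (fun x => Tr.μ (fun y => if y = x then 1 else 0))).prod) := by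
  have := Fintype.ofFinite Q.A
  set sΛ := S.toSystem
  set sT := Tr.toSystem
  obtain ⟨ψ, ⟨hψρ, hψμ⟩, -⟩ :=
    Tr.universal Λ sΛ.vertexHom sΛ.arrowHom sΛ.arrowHom_left sΛ.arrowHom_right
  have hψι (lam : K) : ψ (sT.ι lam) = S.ι lam := (hψρ _).trans (sΛ.vertexHom_const lam)
  have hψe (v : Q.V) : ψ (sT.e v) = S.e v := (hψρ _).trans (sΛ.vertexHom_indicator v)
  have hψar (x : Q.A) : ψ (sT.ar x) = S.ar x := (hψμ _).trans (sΛ.arrowHom_indicator x)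
  have hψ : ⇑ψ ∘ sT.linearCombination = sΛ.linearCombination :=
    funext (sT.map_linearCombination sΛ ψ hψι hψe hψar)
  have hfree : Function.Bijective sΛ.linearCombination := S.free
  have hT : Function.Bijective sT.linearCombination :=
    ⟨.of_comp (f := ψ) (hψ ▸ hfree.1), Tr.linearCombination_surjective⟩
  have hbij : Function.Bijective ψ := (Function.Bijective.of_comp_iff ψ hT).mp (hψ ▸ hfree)
  set e := RingEquiv.ofBijective ψ hbij
  have hsymm_ar (x : Q.A) : e.symm (S.ar x) = Tr.μ (fun y => if y = x then 1 else 0) :=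
    e.symm_apply_eq.mpr (hψar x).symm
  refine ⟨e.symm, fun lam => e.symm_apply_eq.mpr (hψι lam).symm,
    fun v => e.symm_apply_eq.mpr (hψe v).symm, hsymm_ar, fun p _ _ => ?_⟩
  rw [map_list_prod, List.map_map]
  exact congrArg _ (List.map_congr_left fun x _ => hsymm_ar x)
end

section
/- Let (Q,Z) be a locally gentle pair, v a relational vertex, and p = a_1...a_n a path in Q with each consecutive pair a_i a_{i+1} ∉ Z. Then the corresponding sequence of arrows a_1^v, ..., a_n^v in the levee Q^v forms a path in Q^v (i.e. t(a_i^v) = h(a_{i+1}^v) for all i < n). Conversely, every path in Q^v arises this way from a path in Q avoiding the relations broken at v. -/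
attribute [local instance] Classical.propDecidable

/-!
Away from `v` the levee does not change heads and tails. For arrows `x, y` with
`t x = v = h y`, the levee joins `t x` and `h y` exactly when `(x, a) ∈ Z` and `(b, y) ∉ Z`
are equivalent, and by local gentleness around the relation `b a` this happens exactly when
`(x, y) ∉ Z`. Being a path is a condition on consecutive pairs, so this settles both directions.
-/

theorem List.isChain_and_iff {α : Type*} {R S : α → α → Prop} {l : List α} :
    l.IsChain (fun x y => R x y ∧ S x y) ↔ l.IsChain R ∧ l.IsChain S := by
  simp only [List.isChain_iff_forall_rel_of_append_cons_cons, imp_and, forall_and]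

variable {Q : Quiv} {Z : Set (Q.A × Q.A)} {v : Q.V} {b a x y : Q.A}

theorem LocallyGentle.not_mem_iff (lg : LocallyGentle Q Z) (hba : (b, a) ∈ Z)
    (hha : Q.h a = v) (hx : Q.t x = v) (hy : Q.h y = v) :
    (x, y) ∉ Z ↔ ((x, a) ∈ Z ↔ (b, y) ∉ Z) := by
  constructor
  · intro hxy
    constructor
    · intro hxa hby
      obtain rfl : x = b := lg.rel_left a x b hxa hba
      obtain rfl : y = a := lg.rel_right x y a hby hba
      exact hxy hba
    · intro hby
      by_contra hxa
      obtain rfl : a = y := lg.adm_right x a y (hx.trans hha.symm) (hx.trans hy.symm) hxa hxy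
      exact hby hba
  · intro hiff hxy
    by_cases hxa : (x, a) ∈ Z
    · obtain rfl : y = a := lg.rel_right x y a hxy hxa
      exact hiff.1 hxa hba
    · obtain rfl : x = b := lg.rel_left y x b hxy (not_not.1 (mt hiff.2 hxa))
      exact hxa hba

theorem levee_t_eq_h_iff (lg : LocallyGentle Q Z) (hba : (b, a) ∈ Z) (hha : Q.h a = v) :
    (levee Q Z v b a).t x = (levee Q Z v b a).h y ↔
      Q.t x = Q.h y ∧ ¬((x, y) ∈ Z ∧ Q.t x = v) := by
  by_cases hx : Q.t x = v <;> by_cases hy : Q.h y = v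
  · have key := lg.not_mem_iff hba hha hx hy
    simp only [levee, hx, hy, dite_true]
    split_ifs <;> simp_all
  · simp only [levee, hx, hy, dite_true, dite_false]
    split_ifs <;> simp_all [eq_comm]
  · simp only [levee, hx, hy, dite_true, dite_false]
    split_ifs <;> simp_all [eq_comm]
  · simp [levee, hx, hy]

theorem levee_isPath_iff (lg : LocallyGentle Q Z) (hba : (b, a) ∈ Z) (hha : Q.h a = v)
    {p : List Q.A} :
    (levee Q Z v b a).IsPath p ↔
      Q.IsPath p ∧ p.IsChain (fun x y => ¬((x, y) ∈ Z ∧ Q.t x = v)) := by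
  unfold Quiv.IsPath List.Chain'
  rw [← List.isChain_and_iff]
  exact List.IsChain.iff fun x y => levee_t_eq_h_iff lg hba hha

theorem stmt19_general (Q : Quiv) (Z : Set (Q.A × Q.A)) (lg : LocallyGentle Q Z)
    (v : Q.V) (b a : Q.A) (hba : (b, a) ∈ Z) (hha : Q.h a = v) :
    (∀ p : List Q.A, Q.IsPath p → p.Chain' (fun x y => (x, y) ∉ Z) →
      (levee Q Z v b a).IsPath p) ∧
    (∀ p : List Q.A, (levee Q Z v b a).IsPath p →
      Q.IsPath p ∧ p.Chain' (fun x y => ¬((x, y) ∈ Z ∧ Q.t x = v))) :=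
  ⟨fun _ hp hZ => (levee_isPath_iff lg hba hha).2 ⟨hp, hZ.imp fun _ _ h hc => h hc.1⟩,
    fun _ => (levee_isPath_iff lg hba hha).1⟩

/-- Paths in the levee: a path in `Q` all of whose consecutive pairs avoid `Z` gives a
path in `Q^v`; conversely every path in `Q^v` comes from a path in `Q` avoiding the
relations broken at `v` (pairs of `Z` passing through `v`). -/
theorem stmt19 (Q : Quiv) (Z : Set (Q.A × Q.A)) (lg : LocallyGentle Q Z)
    (v : Q.V) (b a : Q.A) (hba : (b, a) ∈ Z) (htb : Q.t b = v) (hha : Q.h a = v) :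
    (∀ p : List Q.A, Q.IsPath p → p.Chain' (fun x y => (x, y) ∉ Z) →
      (levee Q Z v b a).IsPath p) ∧
    (∀ p : List Q.A, (levee Q Z v b a).IsPath p →
      Q.IsPath p ∧ p.Chain' (fun x y => ¬((x, y) ∈ Z ∧ Q.t x = v))) :=
  stmt19_general Q Z lg v b a hba hha
end
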